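/- arXiv:1203.0037 — 4 statements merged into one kernel-verified Lean document; each statement's English description precedes it below -/
import Mathlib

section
/- Let A be a bialgebra, C a coalgebra, and suppose A_{W₀}^{ρ₀} ⋈_R^σ C is a cross product bialgebra (with tensor product coalgebra structure). Let θ, γ : C → A⊗C, written θ(c) = c_{<-1>}⊗c_{<0>}, γ(c) = c_{\{-1\}}⊗c_{\{0\}}, satisfy v_{<-1>} v_{<0>_{\{-1\}}} ⊗ v_{<0>_{\{0\}}} = 1_A⊗v for all v, together with ε_A(c_{<-1>})ε_C(c_{<0>}) = ε_C(c), and the comodule compatibility c_{<-1>} ⊗ c_{<0>₁} ⊗ c_{<0>₂} = c₁_{<-1>} ⊗ c₁_{<0>} ⊗ c₂. Then ε_C(c₁_{<0>}) c₁_{<-1>} c₂_{\{-1\}} ⊗ c₂_{\{0\}} = 1_A ⊗ c and ε_A(c_{\{-1\}}) c_{\{0\}} = c for all c ∈ C. -/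
open TensorProduct LinearMap Coalgebra

noncomputable section

namespace Paper

universe u

variable (k : Type u) [Field k]

section AlgebraSide

variable (A : Type u) [Ring A] [Algebra k A]
variable (V : Type u) [AddCommGroup V] [Module k V]

/-- `a ⊗ (b ⊗ v) ↦ ab ⊗ v`. -/
def muls2 : A ⊗[k] (A ⊗[k] V) →ₗ[k] A ⊗[k] V :=
  rTensor V (mul' k A) ∘ₗ (TensorProduct.assoc k A A V).symm.toLinearMap

/-- `a ⊗ (b ⊗ (c ⊗ v)) ↦ abc ⊗ v`. -/
def muls3 : A ⊗[k] (A ⊗[k] (A ⊗[k] V)) →ₗ[k] A ⊗[k] V :=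
  muls2 k A V ∘ₗ lTensor A (muls2 k A V)

variable {A V}

/-- The multiplication of the Brzezinski crossed product `A ⊗_{R,σ} V`. -/
def brzMul (R : V ⊗[k] A →ₗ[k] A ⊗[k] V) (σ : V ⊗[k] V →ₗ[k] A ⊗[k] V) :
    (A ⊗[k] V) ⊗[k] (A ⊗[k] V) →ₗ[k] A ⊗[k] V :=
  muls2 k A V ∘ₗ
    lTensor A (muls2 k A V ∘ₗ lTensor A σ ∘ₗ (TensorProduct.assoc k A V V).toLinearMap
      ∘ₗ rTensor V R ∘ₗ (TensorProduct.assoc k V A V).symm.toLinearMap) ∘ₗ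
    (TensorProduct.assoc k A V (A ⊗[k] V)).toLinearMap

/-- The axioms (1.1)--(1.5) of a Brzezinski crossed product. -/
structure IsBrzezinski (e : V) (R : V ⊗[k] A →ₗ[k] A ⊗[k] V)
    (σ : V ⊗[k] V →ₗ[k] A ⊗[k] V) : Prop where
  unit_R_left : ∀ a : A, R (e ⊗ₜ a) = a ⊗ₜ e
  unit_R_right : ∀ v : V, R (v ⊗ₜ (1 : A)) = (1 : A) ⊗ₜ v
  unit_σ_left : ∀ v : V, σ (e ⊗ₜ v) = (1 : A) ⊗ₜ v
  unit_σ_right : ∀ v : V, σ (v ⊗ₜ e) = (1 : A) ⊗ₜ v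
  brz3 : R ∘ₗ lTensor V (mul' k A)
      = rTensor V (mul' k A) ∘ₗ (TensorProduct.assoc k A A V).symm.toLinearMap
        ∘ₗ lTensor A R ∘ₗ (TensorProduct.assoc k A V A).toLinearMap
        ∘ₗ rTensor A R ∘ₗ (TensorProduct.assoc k V A A).symm.toLinearMap
  brz4 : muls2 k A V ∘ₗ lTensor A σ ∘ₗ (TensorProduct.assoc k A V V).toLinearMap
        ∘ₗ rTensor V R ∘ₗ (TensorProduct.assoc k V A V).symm.toLinearMap ∘ₗ lTensor V σ
      = muls2 k A V ∘ₗ lTensor A σ ∘ₗ (TensorProduct.assoc k A V V).toLinearMap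
        ∘ₗ rTensor V σ ∘ₗ (TensorProduct.assoc k V V V).symm.toLinearMap
  brz5 : muls2 k A V ∘ₗ lTensor A σ ∘ₗ (TensorProduct.assoc k A V V).toLinearMap
        ∘ₗ rTensor V R ∘ₗ (TensorProduct.assoc k V A V).symm.toLinearMap ∘ₗ lTensor V R
      = muls2 k A V ∘ₗ lTensor A R ∘ₗ (TensorProduct.assoc k A V A).toLinearMap
        ∘ₗ rTensor A σ ∘ₗ (TensorProduct.assoc k V V A).symm.toLinearMap

/-- The twisted tensor product multiplication on `A ⊗ B`, for a "multiplication"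
`m` on the vector space `B`. -/
def ttMul {B : Type u} [AddCommGroup B] [Module k B]
    (R : B ⊗[k] A →ₗ[k] A ⊗[k] B) (m : B ⊗[k] B →ₗ[k] B) :
    (A ⊗[k] B) ⊗[k] (A ⊗[k] B) →ₗ[k] A ⊗[k] B :=
  muls2 k A B ∘ₗ
    lTensor A (lTensor A m ∘ₗ (TensorProduct.assoc k A B B).toLinearMap
      ∘ₗ rTensor B R ∘ₗ (TensorProduct.assoc k B A B).symm.toLinearMap) ∘ₗ
    (TensorProduct.assoc k A B (A ⊗[k] B)).toLinearMap

/-- The axioms of a twisting map `R : B ⊗ A → A ⊗ B`, where the algebra structure on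
the vector space `B` is given by the multiplication `m` with unit `e`. -/
structure IsTwisting {B : Type u} [AddCommGroup B] [Module k B]
    (R : B ⊗[k] A →ₗ[k] A ⊗[k] B) (m : B ⊗[k] B →ₗ[k] B) (e : B) : Prop where
  unit_left : ∀ a : A, R (e ⊗ₜ a) = a ⊗ₜ e
  unit_right : ∀ b : B, R (b ⊗ₜ (1 : A)) = (1 : A) ⊗ₜ b
  mul_A : R ∘ₗ lTensor B (mul' k A)
      = rTensor B (mul' k A) ∘ₗ (TensorProduct.assoc k A A B).symm.toLinearMap
        ∘ₗ lTensor A R ∘ₗ (TensorProduct.assoc k A B A).toLinearMap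
        ∘ₗ rTensor A R ∘ₗ (TensorProduct.assoc k B A A).symm.toLinearMap
  mul_B : R ∘ₗ rTensor A m
      = lTensor A m ∘ₗ (TensorProduct.assoc k A B B).toLinearMap
        ∘ₗ rTensor B R ∘ₗ (TensorProduct.assoc k B A B).symm.toLinearMap
        ∘ₗ lTensor B R ∘ₗ (TensorProduct.assoc k B B A).toLinearMap

/-- The deformed map `R'` of the invariance under twisting theorem (formula (Rprim)). -/
def Rtw (R : V ⊗[k] A →ₗ[k] A ⊗[k] V) (θ γ : V →ₗ[k] A ⊗[k] V) :
    V ⊗[k] A →ₗ[k] A ⊗[k] V :=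
  muls3 k A V ∘ₗ lTensor A (lTensor A γ) ∘ₗ lTensor A R
    ∘ₗ (TensorProduct.assoc k A V A).toLinearMap ∘ₗ rTensor A θ

/-- The deformed map `σ'` of the invariance under twisting theorem (formula (sigmaprim)). -/
def σtw (R : V ⊗[k] A →ₗ[k] A ⊗[k] V) (σ : V ⊗[k] V →ₗ[k] A ⊗[k] V)
    (θ γ : V →ₗ[k] A ⊗[k] V) : V ⊗[k] V →ₗ[k] A ⊗[k] V :=
  muls2 k A V ∘ₗ lTensor A γ ∘ₗ muls3 k A V ∘ₗ lTensor A (lTensor A σ)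
    ∘ₗ lTensor A ((TensorProduct.assoc k A V V).toLinearMap ∘ₗ rTensor V R
        ∘ₗ (TensorProduct.assoc k V A V).symm.toLinearMap)
    ∘ₗ (TensorProduct.assoc k A V (A ⊗[k] V)).toLinearMap ∘ₗ TensorProduct.map θ θ

/-- Condition (cros4), relative to a map `σ'`. -/
def Cros4 (R : V ⊗[k] A →ₗ[k] A ⊗[k] V) (σ : V ⊗[k] V →ₗ[k] A ⊗[k] V)
    (γ : V →ₗ[k] A ⊗[k] V) (σ' : V ⊗[k] V →ₗ[k] A ⊗[k] V) : Prop :=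
  muls2 k A V ∘ₗ TensorProduct.map (mul' k A) σ'
      ∘ₗ (TensorProduct.assoc k (A ⊗[k] A) V V).toLinearMap
      ∘ₗ rTensor V (TensorProduct.assoc k A A V).symm.toLinearMap
      ∘ₗ rTensor V (lTensor A γ) ∘ₗ rTensor V R
      ∘ₗ (TensorProduct.assoc k V A V).symm.toLinearMap ∘ₗ lTensor V γ
    = muls2 k A V ∘ₗ lTensor A γ ∘ₗ σ

/-- Conditions (cros1)--(cros3) on the pair `(θ, γ)`. -/
def Cros123 (e : V) (θ γ : V →ₗ[k] A ⊗[k] V) : Prop :=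
  θ e = (1 : A) ⊗ₜ e ∧ γ e = (1 : A) ⊗ₜ e ∧
  muls2 k A V ∘ₗ lTensor A γ ∘ₗ θ = TensorProduct.mk k A V 1 ∧
  muls2 k A V ∘ₗ lTensor A θ ∘ₗ γ = TensorProduct.mk k A V 1

/-- The map `φ(a ⊗ v) = a v_{<-1>} ⊗ v_{<0>}`. -/
def φtw (θ : V →ₗ[k] A ⊗[k] V) : A ⊗[k] V →ₗ[k] A ⊗[k] V :=
  muls2 k A V ∘ₗ lTensor A θ

end AlgebraSide

section CoalgebraSide

variable (C : Type u) [AddCommGroup C] [Module k C] [Coalgebra k C]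
variable (X : Type u) [AddCommGroup X] [Module k X]

variable {C X}

/-- The comultiplication of the crossed coproduct `X_{W,ρ} ⊗ C`. -/
def coDelta (W : X ⊗[k] C →ₗ[k] C ⊗[k] X) (ρ : X ⊗[k] C →ₗ[k] X ⊗[k] X) :
    X ⊗[k] C →ₗ[k] (X ⊗[k] C) ⊗[k] (X ⊗[k] C) :=
  (TensorProduct.assoc k X C (X ⊗[k] C)).symm.toLinearMap ∘ₗ
  lTensor X (TensorProduct.assoc k C X C).toLinearMap ∘ₗ
  lTensor X (rTensor C W) ∘ₗ
  lTensor X (TensorProduct.assoc k X C C).symm.toLinearMap ∘ₗ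
  (TensorProduct.assoc k X X (C ⊗[k] C)).toLinearMap ∘ₗ
  TensorProduct.map ρ comul ∘ₗ
  (TensorProduct.assoc k X C C).symm.toLinearMap ∘ₗ
  lTensor X comul

/-- The counit `ε_X ⊗ ε_C` of the crossed coproduct. -/
def coEps (εX : X →ₗ[k] k) : X ⊗[k] C →ₗ[k] k :=
  (TensorProduct.lid k k).toLinearMap ∘ₗ TensorProduct.map εX counit

/-- The axioms (cobrz1)--(cobrz5) of a crossed coproduct. -/
structure IsCoBrzezinski (εX : X →ₗ[k] k) (W : X ⊗[k] C →ₗ[k] C ⊗[k] X)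
    (ρ : X ⊗[k] C →ₗ[k] X ⊗[k] X) : Prop where
  counit_W_left : (TensorProduct.rid k C).toLinearMap ∘ₗ lTensor C εX ∘ₗ W
      = (TensorProduct.lid k C).toLinearMap ∘ₗ rTensor C εX
  counit_W_right : (TensorProduct.lid k X).toLinearMap ∘ₗ rTensor X counit ∘ₗ W
      = (TensorProduct.rid k X).toLinearMap ∘ₗ lTensor X counit
  counit_ρ_left : (TensorProduct.rid k X).toLinearMap ∘ₗ lTensor X εX ∘ₗ ρ
      = (TensorProduct.rid k X).toLinearMap ∘ₗ lTensor X counit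
  counit_ρ_right : (TensorProduct.lid k X).toLinearMap ∘ₗ rTensor X εX ∘ₗ ρ
      = (TensorProduct.rid k X).toLinearMap ∘ₗ lTensor X counit
  cobrz3 : rTensor X comul ∘ₗ W
      = (TensorProduct.assoc k C C X).symm.toLinearMap ∘ₗ lTensor C W
        ∘ₗ (TensorProduct.assoc k C X C).toLinearMap ∘ₗ rTensor C W
        ∘ₗ (TensorProduct.assoc k X C C).symm.toLinearMap ∘ₗ lTensor X comul
  cobrz4 : rTensor X ρ ∘ₗ (TensorProduct.assoc k X C X).symm.toLinearMap
        ∘ₗ lTensor X W ∘ₗ (TensorProduct.assoc k X X C).toLinearMap ∘ₗ rTensor C ρ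
        ∘ₗ (TensorProduct.assoc k X C C).symm.toLinearMap ∘ₗ lTensor X comul
      = (TensorProduct.assoc k X X X).symm.toLinearMap ∘ₗ lTensor X ρ
        ∘ₗ (TensorProduct.assoc k X X C).toLinearMap ∘ₗ rTensor C ρ
        ∘ₗ (TensorProduct.assoc k X C C).symm.toLinearMap ∘ₗ lTensor X comul
  cobrz5 : rTensor X W ∘ₗ (TensorProduct.assoc k X C X).symm.toLinearMap
        ∘ₗ lTensor X W ∘ₗ (TensorProduct.assoc k X X C).toLinearMap ∘ₗ rTensor C ρ
        ∘ₗ (TensorProduct.assoc k X C C).symm.toLinearMap ∘ₗ lTensor X comul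
      = (TensorProduct.assoc k C X X).symm.toLinearMap ∘ₗ lTensor C ρ
        ∘ₗ (TensorProduct.assoc k C X C).toLinearMap ∘ₗ rTensor C W
        ∘ₗ (TensorProduct.assoc k X C C).symm.toLinearMap ∘ₗ lTensor X comul

end CoalgebraSide

section BialgebraSide

variable (A : Type u) [Ring A] [Bialgebra k A]
variable (C : Type u) [AddCommGroup C] [Module k C] [Coalgebra k C]

/-- `W₀ : A ⊗ C → C ⊗ A`, the flip. -/
def W0 : A ⊗[k] C →ₗ[k] C ⊗[k] A := (TensorProduct.comm k A C).toLinearMap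

/-- `g₀ : A ⊗ C → A`, `a ⊗ c ↦ ε_C(c) a`. -/
def g0 : A ⊗[k] C →ₗ[k] A :=
  (TensorProduct.rid k A).toLinearMap ∘ₗ lTensor A counit

/-- `ρ₀ : A ⊗ C → A ⊗ A`, `a ⊗ c ↦ ε_C(c) Δ_A(a)`. -/
def ρ0 : A ⊗[k] C →ₗ[k] A ⊗[k] A := comul ∘ₗ g0 k A C

variable {A C}

/-- The property that a comultiplication `Δ` on `Y` is a morphism of algebras, where the
multiplication on `Y` is `m` and the one on `Y ⊗ Y` is componentwise (with the middle flip). -/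
def DeltaIsMulMap {Y : Type u} [AddCommGroup Y] [Module k Y]
    (m : Y ⊗[k] Y →ₗ[k] Y) (Δ : Y →ₗ[k] Y ⊗[k] Y) : Prop :=
  Δ ∘ₗ m = TensorProduct.map m m ∘ₗ (tensorTensorTensorComm k Y Y Y Y).toLinearMap
    ∘ₗ TensorProduct.map Δ Δ

/-- The property that a counit `ε` on `Y` is a morphism of algebras. -/
def EpsIsMulMap {Y : Type u} [AddCommGroup Y] [Module k Y]
    (m : Y ⊗[k] Y →ₗ[k] Y) (ε : Y →ₗ[k] k) : Prop :=
  ε ∘ₗ m = mul' k k ∘ₗ TensorProduct.map ε ε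

/-- `A_{W₀}^{ρ₀} ⋈_R^σ C` is a cross product bialgebra: the crossed product algebra
`A ⊗_{R,σ} C` together with the tensor product coalgebra structure on `A ⊗ C`
form a bialgebra. -/
structure IsCrossBialgebra0 (eC : C) (R : C ⊗[k] A →ₗ[k] A ⊗[k] C)
    (σ : C ⊗[k] C →ₗ[k] A ⊗[k] C) : Prop where
  brz : IsBrzezinski k eC R σ
  delta_mul : DeltaIsMulMap k (brzMul k R σ) (Coalgebra.comul (R := k) (A := A ⊗[k] C))
  delta_one : Coalgebra.comul (R := k) (A := A ⊗[k] C) ((1 : A) ⊗ₜ eC)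
      = ((1 : A) ⊗ₜ eC) ⊗ₜ[k] ((1 : A) ⊗ₜ eC)
  eps_mul : EpsIsMulMap k (brzMul k R σ) (Coalgebra.counit (R := k) (A := A ⊗[k] C))
  eps_one : Coalgebra.counit (R := k) (A := A ⊗[k] C) ((1 : A) ⊗ₜ eC) = 1

/-- `A_{W}^{ρ} ⋈_R^σ C` is a cross product bialgebra: the crossed product algebra
`A ⊗_{R,σ} C` together with the crossed coproduct coalgebra `A_{W,ρ} ⊗ C`
form a bialgebra. -/
structure IsCrossBialgebra (eC : C) (R : C ⊗[k] A →ₗ[k] A ⊗[k] C)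
    (σ : C ⊗[k] C →ₗ[k] A ⊗[k] C) (W : A ⊗[k] C →ₗ[k] C ⊗[k] A)
    (ρ : A ⊗[k] C →ₗ[k] A ⊗[k] A) : Prop where
  brz : IsBrzezinski k eC R σ
  cobrz : IsCoBrzezinski k (Coalgebra.counit (R := k) (A := A)) W ρ
  delta_mul : DeltaIsMulMap k (brzMul k R σ) (coDelta k W ρ)
  delta_one : coDelta k W ρ ((1 : A) ⊗ₜ eC) = ((1 : A) ⊗ₜ eC) ⊗ₜ[k] ((1 : A) ⊗ₜ eC)
  eps_mul : EpsIsMulMap k (brzMul k R σ) (coEps k (Coalgebra.counit (R := k) (A := A)))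
  eps_one : coEps k (Coalgebra.counit (R := k) (A := A)) ((1 : A) ⊗ₜ eC) = 1

/-- The right `C`-coaction `a ⊗ c ↦ (a ⊗ c₁) ⊗ c₂` on `A ⊗ C`. -/
def coactC : A ⊗[k] C →ₗ[k] (A ⊗[k] C) ⊗[k] C :=
  (TensorProduct.assoc k A C C).symm.toLinearMap ∘ₗ lTensor A comul

/-- The counit condition (extra1) for a map `θ : C → A ⊗ C`. -/
def CounitCond (θ : C →ₗ[k] A ⊗[k] C) : Prop :=
  (TensorProduct.lid k k).toLinearMap
      ∘ₗ TensorProduct.map (Coalgebra.counit (R := k) (A := A)) counit ∘ₗ θ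
    = (counit : C →ₗ[k] k)

/-- The right `C`-comodule condition (extra2)/(extra3) for a map `θ : C → A ⊗ C`. -/
def ComodCond (θ : C →ₗ[k] A ⊗[k] C) : Prop :=
  lTensor A comul ∘ₗ θ
    = (TensorProduct.assoc k A C C).toLinearMap ∘ₗ rTensor C θ ∘ₗ comul

/-- The map `c ↦ ε_A(c_{<-1>}) c_{<0>}`. -/
def epsFirst (θ : C →ₗ[k] A ⊗[k] C) : C →ₗ[k] C :=
  (TensorProduct.lid k C).toLinearMap
    ∘ₗ rTensor C (Coalgebra.counit (R := k) (A := A)) ∘ₗ θ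

/-- The map `W'` built from `(θ, γ)`; `h` is applied to the first output factor
(`h = id` for formula (Wprimnou), `h = epsFirst γ` for formula (Wprim)). -/
def Wtw (θ γ : C →ₗ[k] A ⊗[k] C) (h : C →ₗ[k] C) : A ⊗[k] C →ₗ[k] C ⊗[k] A :=
  lTensor C (mul' k A) ∘ₗ (TensorProduct.assoc k C A A).toLinearMap
    ∘ₗ rTensor A (TensorProduct.comm k A C).toLinearMap
    ∘ₗ (TensorProduct.assoc k A C A).symm.toLinearMap
    ∘ₗ rTensor (C ⊗[k] A) (mul' k A)
    ∘ₗ (TensorProduct.assoc k A A (C ⊗[k] A)).symm.toLinearMap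
    ∘ₗ lTensor A (lTensor A (TensorProduct.map h (g0 k A C ∘ₗ γ) ∘ₗ comul) ∘ₗ θ)

/-- Componentwise multiplication `(A ⊗ A) ⊗ (A ⊗ A) → A ⊗ A` (with the middle flip). -/
def mulPair : (A ⊗[k] A) ⊗[k] (A ⊗[k] A) →ₗ[k] A ⊗[k] A :=
  TensorProduct.map (mul' k A) (mul' k A) ∘ₗ (tensorTensorTensorComm k A A A A).toLinearMap

/-- The map `c ↦ c_{{-1}} ⊗ ε_C(c_{{0}}_{{0}}) c_{{0}}_{{-1}}`. -/
def lamAux (γ : C →ₗ[k] A ⊗[k] C) : C →ₗ[k] A ⊗[k] A :=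
  lTensor A (g0 k A C ∘ₗ γ) ∘ₗ γ

/-- The map `κ` appearing in the formula (rhoprim). -/
def kapAux (θ γ : C →ₗ[k] A ⊗[k] C) : C →ₗ[k] A ⊗[k] A :=
  mulPair k ∘ₗ TensorProduct.map comul (lamAux k γ) ∘ₗ θ

/-- The map `ρ'` of formula (rhoprim). -/
def ρtw (θ γ : C →ₗ[k] A ⊗[k] C) : A ⊗[k] C →ₗ[k] A ⊗[k] A :=
  mulPair k ∘ₗ TensorProduct.map comul (kapAux k θ γ)

/-- Auxiliary map for the explicit formula (deltaprim). -/
def eAux (θ γ : C →ₗ[k] A ⊗[k] C) : C →ₗ[k] (A ⊗[k] C) ⊗[k] A :=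
  (TensorProduct.assoc k A C A).symm.toLinearMap
    ∘ₗ lTensor A (TensorProduct.comm k A C).toLinearMap
    ∘ₗ TensorProduct.map (mul' k A) LinearMap.id
    ∘ₗ (tensorTensorTensorComm k A A A C).toLinearMap
    ∘ₗ TensorProduct.map comul γ ∘ₗ θ

/-- Auxiliary map for the explicit formula (deltaprim). -/
def dAux (θ γ : C →ₗ[k] A ⊗[k] C) : C →ₗ[k] (A ⊗[k] C) ⊗[k] (A ⊗[k] C) :=
  lTensor (A ⊗[k] C) (muls2 k A C)
    ∘ₗ (TensorProduct.assoc k (A ⊗[k] C) A (A ⊗[k] C)).toLinearMap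
    ∘ₗ TensorProduct.map (eAux k θ γ) γ ∘ₗ comul

/-- The explicit formula (deltaprim) for the comultiplication `Δ'`. -/
def deltaExplicit (θ γ : C →ₗ[k] A ⊗[k] C) :
    A ⊗[k] C →ₗ[k] (A ⊗[k] C) ⊗[k] (A ⊗[k] C) :=
  TensorProduct.map (muls2 k A C) (muls2 k A C)
    ∘ₗ (tensorTensorTensorComm k A A (A ⊗[k] C) (A ⊗[k] C)).toLinearMap
    ∘ₗ TensorProduct.map comul (dAux k θ γ)

/-- The conditions (cros1)--(cros4) and (extra1)--(extra3) on `(θ, γ)`. -/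
def TwistConditions (eC : C) (R : C ⊗[k] A →ₗ[k] A ⊗[k] C)
    (σ : C ⊗[k] C →ₗ[k] A ⊗[k] C) (θ γ : C →ₗ[k] A ⊗[k] C) : Prop :=
  Cros123 k eC θ γ ∧ Cros4 k R σ γ (σtw k R σ θ γ) ∧
  CounitCond k θ ∧ CounitCond k γ ∧ ComodCond k θ ∧ ComodCond k γ

/-- Equivalence of cross product bialgebras: a linear isomorphism which is a morphism of
bialgebras, of left `A`-modules and of right `C`-comodules; the target is the cross product
bialgebra `A_{W₀}^{ρ₀} ⋈_R^σ C` (with tensor product coalgebra structure), the source is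
`A_{W'}^{ρ'} ⋈_{R'}^{σ'} C`. -/
def CrossEquiv (eC : C) (R : C ⊗[k] A →ₗ[k] A ⊗[k] C) (σ : C ⊗[k] C →ₗ[k] A ⊗[k] C)
    (R' : C ⊗[k] A →ₗ[k] A ⊗[k] C) (σ' : C ⊗[k] C →ₗ[k] A ⊗[k] C)
    (W' : A ⊗[k] C →ₗ[k] C ⊗[k] A) (ρ' : A ⊗[k] C →ₗ[k] A ⊗[k] A) : Prop :=
  ∃ φ : (A ⊗[k] C) ≃ₗ[k] A ⊗[k] C,
    (∀ x y : A ⊗[k] C, φ (brzMul k R' σ' (x ⊗ₜ y)) = brzMul k R σ (φ x ⊗ₜ φ y)) ∧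
    φ ((1 : A) ⊗ₜ eC) = (1 : A) ⊗ₜ eC ∧
    TensorProduct.map φ.toLinearMap φ.toLinearMap ∘ₗ coDelta k W' ρ'
      = Coalgebra.comul (R := k) (A := A ⊗[k] C) ∘ₗ φ.toLinearMap ∧
    Coalgebra.counit (R := k) (A := A ⊗[k] C) ∘ₗ φ.toLinearMap
      = coEps k (Coalgebra.counit (R := k) (A := A)) ∧
    (∀ (a : A) (x : A ⊗[k] C), φ (muls2 k A C (a ⊗ₜ x)) = muls2 k A C (a ⊗ₜ φ x)) ∧
    rTensor C φ.toLinearMap ∘ₗ coactC k = coactC k ∘ₗ φ.toLinearMap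

end BialgebraSide


section Drinfeld

variable (H : Type u) [Ring H] [HopfAlgebra k H]

/-- Convolution product on `H* = Dual k H`: `(p * q)(h) = p(h₁) q(h₂)`. -/
def conv : Module.Dual k H ⊗[k] Module.Dual k H →ₗ[k] Module.Dual k H :=
  (Coalgebra.comul (R := k) (A := H)).dualMap ∘ₗ TensorProduct.dualDistrib k H H

/-- The left regular action `h ⊗ p ↦ h ⇀ p`, `(h ⇀ p)(h') = p(h'h)`. -/
def lact : H ⊗[k] Module.Dual k H →ₗ[k] Module.Dual k H :=
  TensorProduct.lift ((lcomp k (Module.Dual k H) ((LinearMap.mul k H).flip)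
    ∘ₗ llcomp k H H k).flip)

/-- The right regular action `p ⊗ h ↦ p ↼ h`, `(p ↼ h)(h') = p(hh')`. -/
def ract : Module.Dual k H ⊗[k] H →ₗ[k] Module.Dual k H :=
  TensorProduct.lift (lcomp k (Module.Dual k H) (LinearMap.mul k H)
    ∘ₗ llcomp k H H k)

/-- The map `h ⊗ p ↦ (h₁ ⇀ p ↼ S⁻¹(h₃)) ⊗ h₂`, where `Sinv` plays the role of `S⁻¹`. -/
def dPhi (Sinv : H →ₗ[k] H) :
    H ⊗[k] Module.Dual k H →ₗ[k] Module.Dual k H ⊗[k] H :=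
  rTensor H (lact k H)
    ∘ₗ (TensorProduct.assoc k H (Module.Dual k H) H).symm.toLinearMap
    ∘ₗ lTensor H (TensorProduct.comm k H (Module.Dual k H)).toLinearMap
    ∘ₗ lTensor H (lTensor H (ract k H
        ∘ₗ (TensorProduct.comm k H (Module.Dual k H)).toLinearMap
        ∘ₗ rTensor (Module.Dual k H) Sinv))
    ∘ₗ lTensor H (TensorProduct.assoc k H H (Module.Dual k H)).toLinearMap
    ∘ₗ (TensorProduct.assoc k H (H ⊗[k] H) (Module.Dual k H)).toLinearMap
    ∘ₗ rTensor (Module.Dual k H) (lTensor H comul ∘ₗ comul)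

/-- The multiplication of the Drinfeld double:
`(p ⊗ h)(p' ⊗ h') = p (h₁ ⇀ p' ↼ S⁻¹(h₃)) ⊗ h₂ h'`. -/
def dMul (Sinv : H →ₗ[k] H) :
    (Module.Dual k H ⊗[k] H) ⊗[k] (Module.Dual k H ⊗[k] H) →ₗ[k]
      Module.Dual k H ⊗[k] H :=
  rTensor H (conv k H)
    ∘ₗ (TensorProduct.assoc k (Module.Dual k H) (Module.Dual k H) H).symm.toLinearMap
    ∘ₗ lTensor (Module.Dual k H)
        (lTensor (Module.Dual k H) (mul' k H)
          ∘ₗ (TensorProduct.assoc k (Module.Dual k H) H H).toLinearMap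
          ∘ₗ rTensor H (dPhi k H Sinv)
          ∘ₗ (TensorProduct.assoc k H (Module.Dual k H) H).symm.toLinearMap)
    ∘ₗ (TensorProduct.assoc k (Module.Dual k H) H
          (Module.Dual k H ⊗[k] H)).toLinearMap

/-- The comultiplication of `H*`, dual to the multiplication of `H` (finite dimensional). -/
def comulD [FiniteDimensional k H] :
    Module.Dual k H →ₗ[k] Module.Dual k H ⊗[k] Module.Dual k H :=
  (TensorProduct.dualDistribEquiv k H H).symm.toLinearMap ∘ₗ (mul' k H).dualMap

/-- The comultiplication of `H^{*cop}`. -/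
def comulDcop [FiniteDimensional k H] :
    Module.Dual k H →ₗ[k] Module.Dual k H ⊗[k] Module.Dual k H :=
  (TensorProduct.comm k (Module.Dual k H) (Module.Dual k H)).toLinearMap ∘ₗ comulD k H

/-- The counit of `H*`: evaluation at `1`. -/
def counitD : Module.Dual k H →ₗ[k] k := Module.Dual.eval k H 1

/-- The comultiplication of the tensor product coalgebra `H^{*cop} ⊗ H`. -/
def deltaD [FiniteDimensional k H] :
    Module.Dual k H ⊗[k] H →ₗ[k]
      (Module.Dual k H ⊗[k] H) ⊗[k] (Module.Dual k H ⊗[k] H) :=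
  (tensorTensorTensorComm k (Module.Dual k H) (Module.Dual k H) H H).toLinearMap
    ∘ₗ TensorProduct.map (comulDcop k H) comul

/-- The counit of the tensor product coalgebra `H^{*cop} ⊗ H`. -/
def epsD : Module.Dual k H ⊗[k] H →ₗ[k] k :=
  (TensorProduct.lid k k).toLinearMap
    ∘ₗ TensorProduct.map (counitD k H) (Coalgebra.counit (R := k) (A := H))

/-- The left `H^{*cop}`-coaction on `H^{*cop} ⊗ H`: `p ⊗ h ↦ p₂ ⊗ (p₁ ⊗ h)`. -/
def coactD [FiniteDimensional k H] :
    Module.Dual k H ⊗[k] H →ₗ[k]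
      Module.Dual k H ⊗[k] (Module.Dual k H ⊗[k] H) :=
  (TensorProduct.assoc k (Module.Dual k H) (Module.Dual k H) H).toLinearMap
    ∘ₗ rTensor H (comulDcop k H)

/-- `r₁₂ ∈ H ⊗ (H ⊗ H)` for `r ∈ H ⊗ H`. -/
def r12 (r : H ⊗[k] H) : H ⊗[k] (H ⊗[k] H) :=
  lTensor H ((TensorProduct.mk k H H).flip 1) r

/-- `r₁₃ ∈ H ⊗ (H ⊗ H)` for `r ∈ H ⊗ H`. -/
def r13 (r : H ⊗[k] H) : H ⊗[k] (H ⊗[k] H) :=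
  lTensor H (TensorProduct.mk k H H 1) r

/-- `r₂₃ ∈ H ⊗ (H ⊗ H)` for `r ∈ H ⊗ H`. -/
def r23 (r : H ⊗[k] H) : H ⊗[k] (H ⊗[k] H) := (1 : H) ⊗ₜ r

/-- `r` is a quasitriangular structure on `H`. -/
structure IsQuasitriangular (r : H ⊗[k] H) : Prop where
  qt1 : (TensorProduct.assoc k H H H) (rTensor H comul r) = r13 k H r * r23 k H r
  qt2 : lTensor H comul r = r13 k H r * r12 k H r
  qt3 : ∀ h : H, (TensorProduct.comm k H H) (comul h) * r = r * comul h
  qt4l : (TensorProduct.lid k H)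
      (rTensor H (Coalgebra.counit (R := k) (A := H)) r) = 1
  qt4r : (TensorProduct.rid k H)
      (lTensor H (Coalgebra.counit (R := k) (A := H)) r) = 1

/-- Majid's map `φ(p ⊗ h) = (p ↼ S⁻¹(r¹)) ⊗ r² h`. -/
def phiMajid (r : H ⊗[k] H) (Sinv : H →ₗ[k] H) :
    Module.Dual k H ⊗[k] H →ₗ[k] Module.Dual k H ⊗[k] H :=
  TensorProduct.map (ract k H ∘ₗ lTensor (Module.Dual k H) Sinv)
      (mul' k H ∘ₗ (TensorProduct.comm k H H).toLinearMap)
    ∘ₗ (tensorTensorTensorComm k (Module.Dual k H) H H H).toLinearMap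
    ∘ₗ (TensorProduct.mk k (Module.Dual k H ⊗[k] H) (H ⊗[k] H)).flip r

end Drinfeld

end Paper

universe u
open Paper

/-! Put `p = epsFirst θ`, i.e. `p c = ε_A(c_{<-1>}) c_{<0>}`. By (extra2) `p` is an
endomorphism of the right `C`-comodule `C`, and by (extra1) it preserves the counit, so `p = id`.
Applying `ε_A ⊗ id` to (cros2), and using that `ε_A` is multiplicative, gives
`epsFirst γ ∘ p = id`, which is (cucu4). For (cucu1), (extra2) turns
`c₁_{<-1>} ⊗ c₁_{<0>} ⊗ c₂` into `c_{<-1>} ⊗ c_{<0>₁} ⊗ c_{<0>₂}`; the counit then contracts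
`c_{<0>₁}`, leaving the left-hand side of (cros2). -/

namespace Coalgebra

variable {R C : Type*} [CommSemiring R] [AddCommMonoid C] [Module R C] [Coalgebra R C]

theorem lid_rTensor_counit_comul (c : C) :
    TensorProduct.lid R C (counit.rTensor C (comul c)) = c := by
  rw [rTensor_counit_comul, TensorProduct.lid_tmul, one_smul]

theorem eq_id_of_comul_comp_of_counit_comp {f : C →ₗ[R] C}
    (hcomul : comul ∘ₗ f = f.rTensor C ∘ₗ comul) (hcounit : counit ∘ₗ f = counit) :
    f = LinearMap.id := by
  ext c
  calc f c = TensorProduct.lid R C (counit.rTensor C (comul (f c))) :=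
        (lid_rTensor_counit_comul (f c)).symm
    _ = TensorProduct.lid R C ((counit ∘ₗ f).rTensor C (comul c)) := by
        rw [← LinearMap.comp_apply comul f, hcomul, LinearMap.comp_apply, rTensor_comp_apply]
    _ = c := by rw [hcounit, lid_rTensor_counit_comul]

end Coalgebra

namespace Paper

variable {k A : Type u} [Field k] [Ring A] [Bialgebra k A]
variable {D D' : Type u} [AddCommGroup D] [Module k D] [AddCommGroup D'] [Module k D']

variable (k A D) in
def counitLeft : A ⊗[k] D →ₗ[k] D :=
  (TensorProduct.lid k D).toLinearMap ∘ₗ rTensor D (counit (R := k) (A := A))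

@[simp]
theorem counitLeft_tmul (a : A) (d : D) :
    counitLeft k A D (a ⊗ₜ d) = counit (R := k) a • d := by
  simp [counitLeft]

theorem counitLeft_comp_lTensor (f : D →ₗ[k] D') :
    counitLeft k A D' ∘ₗ lTensor A f = f ∘ₗ counitLeft k A D := by
  ext a d
  simp

theorem counitLeft_comp_muls2 :
    counitLeft k A D ∘ₗ muls2 k A D = counitLeft k A D ∘ₗ lTensor A (counitLeft k A D) := by
  ext a b d
  simp [muls2, mul_smul, smul_comm (counit (R := k) a)]

theorem counitLeft_comp_assoc :
    counitLeft k A (D ⊗[k] D') ∘ₗ (TensorProduct.assoc k A D D').toLinearMap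
      = rTensor D' (counitLeft k A D) := by
  ext a d d'
  simp [smul_tmul']

theorem counitLeft_comp_mk_one :
    counitLeft k A D ∘ₗ TensorProduct.mk k A D 1 = LinearMap.id := by
  ext d
  simp

theorem epsFirst_eq_counitLeft_comp (θ : D →ₗ[k] A ⊗[k] D) :
    epsFirst k θ = counitLeft k A D ∘ₗ θ := rfl

theorem epsFirst_muls2_comp (f g : D →ₗ[k] A ⊗[k] D) :
    epsFirst k (muls2 k A D ∘ₗ lTensor A g ∘ₗ f) = epsFirst k g ∘ₗ epsFirst k f := by
  rw [epsFirst_eq_counitLeft_comp, epsFirst_eq_counitLeft_comp, epsFirst_eq_counitLeft_comp]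
  calc counitLeft k A D ∘ₗ muls2 k A D ∘ₗ lTensor A g ∘ₗ f
      = counitLeft k A D ∘ₗ lTensor A (counitLeft k A D ∘ₗ g) ∘ₗ f := by
        rw [← LinearMap.comp_assoc _ (muls2 k A D), counitLeft_comp_muls2, lTensor_comp]; rfl
    _ = (counitLeft k A D ∘ₗ g) ∘ₗ counitLeft k A D ∘ₗ f := by
        rw [← LinearMap.comp_assoc f, counitLeft_comp_lTensor]; rfl

theorem epsFirst_mk_one : epsFirst k (TensorProduct.mk k A D 1) = LinearMap.id :=
  counitLeft_comp_mk_one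

variable {C : Type u} [AddCommGroup C] [Module k C] [Coalgebra k C]

theorem comul_comp_epsFirst {θ : C →ₗ[k] A ⊗[k] C} (hθ : ComodCond k θ) :
    comul ∘ₗ epsFirst k θ = (epsFirst k θ).rTensor C ∘ₗ comul := by
  rw [epsFirst_eq_counitLeft_comp, ← LinearMap.comp_assoc, ← counitLeft_comp_lTensor,
    LinearMap.comp_assoc, hθ, ← LinearMap.comp_assoc, counitLeft_comp_assoc,
    ← LinearMap.comp_assoc, ← rTensor_comp]

theorem counit_comp_epsFirst {θ : C →ₗ[k] A ⊗[k] C} (hθ : CounitCond k θ) :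
    counit ∘ₗ epsFirst k θ = counit := by
  have hcounitLeft : counit ∘ₗ counitLeft k A C
      = (TensorProduct.lid k k).toLinearMap ∘ₗ TensorProduct.map counit counit := by
    ext a c
    simp
  rw [epsFirst_eq_counitLeft_comp, ← LinearMap.comp_assoc, hcounitLeft]
  exact hθ

theorem epsFirst_eq_id {θ : C →ₗ[k] A ⊗[k] C} (hcounit : CounitCond k θ)
    (hcomod : ComodCond k θ) : epsFirst k θ = LinearMap.id :=
  Coalgebra.eq_id_of_comul_comp_of_counit_comp (comul_comp_epsFirst hcomod)
    (counit_comp_epsFirst hcounit)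

theorem muls2_comp_map_g0 (γ : C →ₗ[k] A ⊗[k] C) :
    muls2 k A C ∘ₗ TensorProduct.map (g0 k A C) γ
      = muls2 k A C ∘ₗ lTensor A γ
          ∘ₗ lTensor A ((TensorProduct.lid k C).toLinearMap ∘ₗ rTensor C counit)
          ∘ₗ (TensorProduct.assoc k A C C).toLinearMap := by
  ext a x y
  simp [muls2, g0, smul_tmul']

theorem muls2_map_g0_comp_comul {θ : C →ₗ[k] A ⊗[k] C} (γ : C →ₗ[k] A ⊗[k] C)
    (hθ : ComodCond k θ) :
    muls2 k A C ∘ₗ TensorProduct.map (g0 k A C ∘ₗ θ) γ ∘ₗ comul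
      = muls2 k A C ∘ₗ lTensor A γ ∘ₗ θ := by
  have hcounit : ((TensorProduct.lid k C).toLinearMap ∘ₗ rTensor C counit) ∘ₗ comul
      = (LinearMap.id : C →ₗ[k] C) :=
    LinearMap.ext Coalgebra.lid_rTensor_counit_comul
  calc muls2 k A C ∘ₗ TensorProduct.map (g0 k A C ∘ₗ θ) γ ∘ₗ comul
      = (muls2 k A C ∘ₗ TensorProduct.map (g0 k A C) γ) ∘ₗ rTensor C θ ∘ₗ comul := by
        rw [← map_comp_rTensor]; rfl
    _ = muls2 k A C ∘ₗ lTensor A γ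
          ∘ₗ lTensor A ((TensorProduct.lid k C).toLinearMap ∘ₗ rTensor C counit)
          ∘ₗ lTensor A comul ∘ₗ θ := by
        rw [muls2_comp_map_g0, hθ]; rfl
    _ = muls2 k A C ∘ₗ lTensor A γ ∘ₗ θ := by
        rw [← LinearMap.comp_assoc θ, ← lTensor_comp, hcounit, lTensor_id, LinearMap.id_comp]

end Paper

theorem statement11_general {k A C : Type u} [Field k] [Ring A] [Bialgebra k A]
    [AddCommGroup C] [Module k C] [Coalgebra k C]
    (θ γ : C →ₗ[k] A ⊗[k] C)
    (hcros2 : muls2 k A C ∘ₗ lTensor A γ ∘ₗ θ = TensorProduct.mk k A C 1)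
    (hextra1 : CounitCond k θ) (hextra2 : ComodCond k θ) :
    muls2 k A C ∘ₗ TensorProduct.map (g0 k A C ∘ₗ θ) γ ∘ₗ Coalgebra.comul
      = TensorProduct.mk k A C 1 ∧
    epsFirst k γ = LinearMap.id := by
  refine ⟨(muls2_map_g0_comp_comul γ hextra2).trans hcros2, ?_⟩
  have h := congr(epsFirst k $hcros2)
  rwa [epsFirst_muls2_comp, epsFirst_eq_id hextra1 hextra2, epsFirst_mk_one,
    LinearMap.comp_id] at h

/-- from (cros2), (extra1) for `θ` and (extra2) one derives
(cucu1): `ε_C(c₁_{<0>}) c₁_{<-1>} c₂_{{-1}} ⊗ c₂_{{0}} = 1_A ⊗ c` and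
(cucu4): `ε_A(c_{{-1}}) c_{{0}} = c`. -/
theorem statement11 {k A C : Type u} [Field k] [Ring A] [Bialgebra k A]
    [AddCommGroup C] [Module k C] [Coalgebra k C] (eC : C)
    (R : C ⊗[k] A →ₗ[k] A ⊗[k] C) (σ : C ⊗[k] C →ₗ[k] A ⊗[k] C)
    (hcross : IsCrossBialgebra0 k eC R σ)
    (θ γ : C →ₗ[k] A ⊗[k] C)
    (hcros2 : muls2 k A C ∘ₗ lTensor A γ ∘ₗ θ = TensorProduct.mk k A C 1)
    (hextra1 : CounitCond k θ) (hextra2 : ComodCond k θ) :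
    muls2 k A C ∘ₗ TensorProduct.map (g0 k A C ∘ₗ θ) γ ∘ₗ Coalgebra.comul
      = TensorProduct.mk k A C 1 ∧
    epsFirst k γ = LinearMap.id :=
  statement11_general θ γ hcros2 hextra1 hextra2
end
end

section
/- Let A be an associative unital algebra, and let B, B' be two associative unital algebra structures on the same vector space with the same unit 1_B, with multiplications (b,b') ↦ bb' and (b,b') ↦ b*b'. Two twisted tensor products A ⊗_R B and A ⊗_{R'} B' are A-equivalent (there is an algebra isomorphism φ : A⊗_{R'}B' → A⊗_R B with φ(a⊗1_B) = a⊗1_B) if and only if there exist linear maps θ, γ : B → A⊗B, θ(b) = b_{<-1>}⊗b_{<0>}, γ(b) = b_{\{-1\}}⊗b_{\{0\}}, such that: θ is an algebra map from B' to A⊗_R B; γ(1_B) = 1_A⊗1_B; γ(bb') = b'_{\{-1\}_R} b_{R_{\{-1\}}} ⊗ b_{R_{\{0\}}} * b'_{\{0\}}; b_{<-1>} b_{<0>_{\{-1\}}} ⊗ b_{<0>_{\{0\}}} = 1⊗b; b_{\{-1\}} b_{\{0\}_{<-1>}} ⊗ b_{\{0\}_{<0>}} = 1⊗b; and R'(b⊗a)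 = b_{<-1>} a_R b_{<0>_{R_{\{-1\}}}} ⊗ b_{<0>_{R_{\{0\}}}}. -/
open TensorProduct LinearMap Coalgebra

noncomputable section

universe u
open Paper

/-! An `A`-equivalence `φ` is left `A`-linear, because `a • z = (a ⊗ 1) z` and `φ` fixes
`a ⊗ 1`. Hence `φ = φtw θ` with `θ b = φ (1 ⊗ b)`, and likewise `φ⁻¹ = φtw γ`. Multiplicativity
of `φ` on `(1 ⊗ b) (1 ⊗ b')` makes `θ` an algebra map, on `(1 ⊗ b) (a ⊗ 1) = R' (b ⊗ a)` it gives
the formula for `R'`, and multiplicativity of `φ⁻¹` gives the condition on `γ`. Conversely,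
the conditions make `φtw θ` and `φtw γ` mutually inverse, and `φtw θ` is multiplicative by a
computation on pure tensors that uses the algebra map `θ`, the formula for `R'`, and the
compatibility of `R` with the multiplication of `A`. -/

namespace Paper

section LeftLinear

variable {k A B : Type u} [Field k] [Ring A] [Algebra k A] [AddCommGroup B] [Module k B]

@[simp]
lemma muls2_tmul (a : A) (z : A ⊗[k] B) : muls2 k A B (a ⊗ₜ z) = a • z := by
  induction z using TensorProduct.induction_on with
  | zero => simp
  | tmul c d => simp [muls2, mul'_apply, smul_tmul']
  | add x y hx hy => simp only [tmul_add, map_add, smul_add, hx, hy]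

lemma φtw_tmul (θ : B →ₗ[k] A ⊗[k] B) (a : A) (b : B) : φtw k θ (a ⊗ₜ b) = a • θ b := by
  simp [φtw]

lemma φtw_smul (θ : B →ₗ[k] A ⊗[k] B) (a : A) (z : A ⊗[k] B) :
    φtw k θ (a • z) = a • φtw k θ z := by
  induction z using TensorProduct.induction_on with
  | zero => simp
  | tmul c d => simp [φtw_tmul, smul_tmul', mul_smul]
  | add x y hx hy => simp only [smul_add, map_add, hx, hy]

lemma φtw_comp_φtw (θ γ : B →ₗ[k] A ⊗[k] B) :
    φtw k γ ∘ₗ φtw k θ = φtw k (φtw k γ ∘ₗ θ) :=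
  TensorProduct.ext' fun a b => by simp [φtw_tmul, φtw_smul]

lemma φtw_mk_one : φtw k (TensorProduct.mk k A B 1) = LinearMap.id :=
  TensorProduct.ext' fun a b => by simp [φtw_tmul, smul_tmul']

lemma eq_φtw_of_map_smul (φ : A ⊗[k] B →ₗ[k] A ⊗[k] B)
    (h : ∀ (a : A) (z : A ⊗[k] B), φ (a • z) = a • φ z) :
    φ = φtw k (φ ∘ₗ TensorProduct.mk k A B 1) :=
  TensorProduct.ext' fun a b => by
    simpa [φtw_tmul, smul_tmul'] using h a ((1 : A) ⊗ₜ b)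

end LeftLinear

section TwistedMul

variable {k A B : Type u} [Field k] [Ring A] [Algebra k A] [AddCommGroup B] [Module k B]
variable (R : B ⊗[k] A →ₗ[k] A ⊗[k] B) (m : B ⊗[k] B →ₗ[k] B)

/- Right multiplication by `a ⊗ 1`, resp. `1 ⊗ d`, in `A ⊗_R B`
(see `ttMul_tmul_unit` and `ttMul_tmul_right`). -/
def mulRightA : (A ⊗[k] B) ⊗[k] A →ₗ[k] A ⊗[k] B :=
  muls2 k A B ∘ₗ lTensor A R ∘ₗ (TensorProduct.assoc k A B A).toLinearMap

def mulRightB : (A ⊗[k] B) ⊗[k] B →ₗ[k] A ⊗[k] B :=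
  lTensor A m ∘ₗ (TensorProduct.assoc k A B B).toLinearMap

lemma mulRightA_tmul (x : A) (y : B) (a : A) :
    mulRightA R ((x ⊗ₜ y) ⊗ₜ a) = x • R (y ⊗ₜ a) := by
  simp [mulRightA]

lemma mulRightA_one_tmul (b : B) (a : A) : mulRightA R (((1 : A) ⊗ₜ b) ⊗ₜ a) = R (b ⊗ₜ a) := by
  simp [mulRightA_tmul]

lemma mulRightA_smul (a : A) (z : A ⊗[k] B) (c : A) :
    mulRightA R ((a • z) ⊗ₜ c) = a • mulRightA R (z ⊗ₜ c) := by
  induction z using TensorProduct.induction_on with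
  | zero => simp
  | tmul x y => simp [smul_tmul', mulRightA_tmul, mul_smul]
  | add x y hx hy => simp only [smul_add, add_tmul, map_add, hx, hy]

lemma mulRightB_tmul (x : A) (y d : B) :
    mulRightB m ((x ⊗ₜ y) ⊗ₜ d) = x ⊗ₜ m (y ⊗ₜ d) := by
  simp [mulRightB]

lemma mulRightB_smul (a : A) (z : A ⊗[k] B) (d : B) :
    mulRightB m ((a • z) ⊗ₜ d) = a • mulRightB m (z ⊗ₜ d) := by
  induction z using TensorProduct.induction_on with
  | zero => simp
  | tmul x y => simp [smul_tmul', mulRightB_tmul]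
  | add x y hx hy => simp only [smul_add, add_tmul, map_add, hx, hy]

lemma ttMul_tmul_tmul (a : A) (b : B) (c : A) (d : B) :
    ttMul k R m ((a ⊗ₜ b) ⊗ₜ (c ⊗ₜ d)) = a • mulRightB m (R (b ⊗ₜ c) ⊗ₜ d) := by
  simp [ttMul, mulRightB]

lemma ttMul_smul_left (a : A) (z w : A ⊗[k] B) :
    ttMul k R m ((a • z) ⊗ₜ w) = a • ttMul k R m (z ⊗ₜ w) := by
  induction z using TensorProduct.induction_on with
  | zero => simp
  | tmul x y =>
    induction w using TensorProduct.induction_on with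
    | zero => simp
    | tmul c d => simp only [smul_tmul', smul_eq_mul, ttMul_tmul_tmul, mul_smul]
    | add u v hu hv => simp only [tmul_add, map_add, smul_add, hu, hv]
  | add x y hx hy => simp only [smul_add, add_tmul, map_add, hx, hy]

lemma ttMul_tmul_right (z : A ⊗[k] B) (c : A) (d : B) :
    ttMul k R m (z ⊗ₜ (c ⊗ₜ d)) = mulRightB m (mulRightA R (z ⊗ₜ c) ⊗ₜ d) := by
  induction z using TensorProduct.induction_on with
  | zero => simp
  | tmul x y => rw [ttMul_tmul_tmul, mulRightA_tmul, mulRightB_smul]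
  | add x y hx hy => simp only [add_tmul, map_add, hx, hy]

lemma ttMul_unit_tmul {e : B} (hR : ∀ a : A, R (e ⊗ₜ a) = a ⊗ₜ e)
    (hm : ∀ b : B, m (e ⊗ₜ b) = b) (a : A) (z : A ⊗[k] B) :
    ttMul k R m ((a ⊗ₜ e) ⊗ₜ z) = a • z := by
  induction z using TensorProduct.induction_on with
  | zero => simp
  | tmul c d => rw [ttMul_tmul_tmul, hR, mulRightB_tmul, hm, smul_tmul', smul_eq_mul]
  | add x y hx hy => simp only [tmul_add, map_add, smul_add, hx, hy]

lemma ttMul_tmul_unit {e : B} (hm : ∀ b : B, m (b ⊗ₜ e) = b) (z : A ⊗[k] B) (a : A) :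
    ttMul k R m (z ⊗ₜ (a ⊗ₜ e)) = mulRightA R (z ⊗ₜ a) := by
  rw [ttMul_tmul_right]
  induction mulRightA R (z ⊗ₜ a) using TensorProduct.induction_on with
  | zero => simp
  | tmul x y => rw [mulRightB_tmul, hm]
  | add x y hx hy => simp only [add_tmul, map_add, hx, hy]

lemma ttMul_one_tmul_one_tmul (hR : ∀ b : B, R (b ⊗ₜ (1 : A)) = (1 : A) ⊗ₜ b) (b b' : B) :
    ttMul k R m (((1 : A) ⊗ₜ b) ⊗ₜ ((1 : A) ⊗ₜ b')) = (1 : A) ⊗ₜ m (b ⊗ₜ b') := by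
  rw [ttMul_tmul_tmul, hR, mulRightB_tmul, one_smul]

lemma IsTwisting.apply_tmul_mul {e : B} (hR : IsTwisting k R m e) (b : B) (a c : A) :
    R (b ⊗ₜ (a * c)) = mulRightA R (R (b ⊗ₜ a) ⊗ₜ c) :=
  LinearMap.congr_fun hR.mul_A (b ⊗ₜ (a ⊗ₜ c))

lemma mulRightA_tmul_mul {e : B} (hR : IsTwisting k R m e) (z : A ⊗[k] B) (a c : A) :
    mulRightA R (z ⊗ₜ (a * c)) = mulRightA R (mulRightA R (z ⊗ₜ a) ⊗ₜ c) := by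
  induction z using TensorProduct.induction_on with
  | zero => simp
  | tmul x y => rw [mulRightA_tmul, mulRightA_tmul, mulRightA_smul, hR.apply_tmul_mul]
  | add x y hx hy => simp only [add_tmul, map_add, hx, hy]

lemma ttMul_smul_right {e : B} (hR : IsTwisting k R m e) (z : A ⊗[k] B) (a : A) (w : A ⊗[k] B) :
    ttMul k R m (z ⊗ₜ (a • w)) = ttMul k R m (mulRightA R (z ⊗ₜ a) ⊗ₜ w) := by
  induction w using TensorProduct.induction_on with
  | zero => simp
  | tmul c d =>
    rw [smul_tmul', smul_eq_mul, ttMul_tmul_right, ttMul_tmul_right, mulRightA_tmul_mul R m hR]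
  | add x y hx hy => simp only [smul_add, tmul_add, map_add, hx, hy]

lemma Rtw_tmul (θ γ : B →ₗ[k] A ⊗[k] B) (b : B) (a : A) :
    Rtw k R θ γ (b ⊗ₜ a) = φtw k γ (mulRightA R (θ b ⊗ₜ a)) := by
  simp only [Rtw, coe_comp, Function.comp_apply, rTensor_tmul]
  induction θ b using TensorProduct.induction_on with
  | zero => simp
  | tmul x y =>
    simp only [muls3, LinearEquiv.coe_coe, assoc_tmul, lTensor_tmul, coe_comp, Function.comp_apply,
      muls2_tmul, mulRightA_tmul, φtw_smul]
    rfl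
  | add x y hx hy => simp only [add_tmul, map_add, hx, hy]

end TwistedMul

section Equivalence

variable {k A B : Type u} [Field k] [Ring A] [Algebra k A] [AddCommGroup B] [Module k B]
variable (R R' : B ⊗[k] A →ₗ[k] A ⊗[k] B) (m m' : B ⊗[k] B →ₗ[k] B)

lemma φtw_mulRightB (θ : B →ₗ[k] A ⊗[k] B)
    (hθ : ∀ b b' : B, θ (m' (b ⊗ₜ b')) = ttMul k R m (θ b ⊗ₜ θ b'))
    (w : A ⊗[k] B) (b' : B) :
    φtw k θ (mulRightB m' (w ⊗ₜ b')) = ttMul k R m (φtw k θ w ⊗ₜ θ b') := by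
  induction w using TensorProduct.induction_on with
  | zero => simp
  | tmul c d => rw [mulRightB_tmul, φtw_tmul, φtw_tmul, hθ, ttMul_smul_left]
  | add x y hx hy => simp only [add_tmul, map_add, hx, hy]

theorem φtw_ttMul_Rtw {e : B} (hR : IsTwisting k R m e) (θ γ : B →ₗ[k] A ⊗[k] B)
    (hθ : ∀ b b' : B, θ (m' (b ⊗ₜ b')) = ttMul k R m (θ b ⊗ₜ θ b'))
    (hθγ : φtw k θ ∘ₗ φtw k γ = LinearMap.id) (x y : A ⊗[k] B) :
    φtw k θ (ttMul k (Rtw k R θ γ) m' (x ⊗ₜ y)) = ttMul k R m (φtw k θ x ⊗ₜ φtw k θ y) := by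
  induction x using TensorProduct.induction_on with
  | zero => simp
  | tmul a b =>
    induction y using TensorProduct.induction_on with
    | zero => simp
    | tmul c d =>
      have hRtw : φtw k θ (Rtw k R θ γ (b ⊗ₜ c)) = mulRightA R (θ b ⊗ₜ c) := by
        rw [Rtw_tmul, ← LinearMap.comp_apply, hθγ, LinearMap.id_apply]
      rw [ttMul_tmul_tmul, φtw_smul, φtw_mulRightB R m m' θ hθ, hRtw, φtw_tmul, φtw_tmul,
        ttMul_smul_left, ttMul_smul_right R m hR]
    | add u v hu hv => simp only [tmul_add, map_add, hu, hv]
  | add u v hu hv => simp only [add_tmul, map_add, hu, hv]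

lemma map_smul_of_map_ttMul {e : B} (hR : ∀ a : A, R (e ⊗ₜ a) = a ⊗ₜ e)
    (hm : ∀ b : B, m (e ⊗ₜ b) = b) (hR' : ∀ a : A, R' (e ⊗ₜ a) = a ⊗ₜ e)
    (hm' : ∀ b : B, m' (e ⊗ₜ b) = b) (φ : A ⊗[k] B →ₗ[k] A ⊗[k] B)
    (hmul : ∀ x y : A ⊗[k] B, φ (ttMul k R' m' (x ⊗ₜ y)) = ttMul k R m (φ x ⊗ₜ φ y))
    (hunit : ∀ a : A, φ (a ⊗ₜ e) = a ⊗ₜ e) (a : A) (z : A ⊗[k] B) :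
    φ (a • z) = a • φ z := by
  rw [← ttMul_unit_tmul R' m' hR' hm', hmul, hunit, ttMul_unit_tmul R m hR hm]

lemma map_mulRightA_of_map_ttMul {e : B} (hm : ∀ b : B, m (b ⊗ₜ e) = b)
    (hm' : ∀ b : B, m' (b ⊗ₜ e) = b) (φ : A ⊗[k] B →ₗ[k] A ⊗[k] B)
    (hmul : ∀ x y : A ⊗[k] B, φ (ttMul k R' m' (x ⊗ₜ y)) = ttMul k R m (φ x ⊗ₜ φ y))
    (hunit : ∀ a : A, φ (a ⊗ₜ e) = a ⊗ₜ e) (z : A ⊗[k] B) (a : A) :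
    φ (mulRightA R' (z ⊗ₜ a)) = mulRightA R (φ z ⊗ₜ a) := by
  rw [← ttMul_tmul_unit R' m' hm', hmul, hunit, ttMul_tmul_unit R m hm]

lemma map_mul'_assoc_rTensor_tmul (γ : B →ₗ[k] A ⊗[k] B) (u : A ⊗[k] B) (d : B) :
    TensorProduct.map (mul' k A) m' ((TensorProduct.assoc k (A ⊗[k] A) B B)
      (rTensor B (TensorProduct.assoc k A A B).symm.toLinearMap
        (rTensor B (lTensor A γ) (u ⊗ₜ d))))
      = mulRightB m' (φtw k γ u ⊗ₜ d) := by
  induction u using TensorProduct.induction_on with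
  | zero => simp
  | tmul a b =>
    simp only [rTensor_tmul, lTensor_tmul, φtw_tmul]
    induction γ b using TensorProduct.induction_on with
    | zero => simp
    | tmul c y => simp [mulRightB_tmul, smul_tmul', mul'_apply]
    | add x y hx hy => simp only [tmul_add, add_tmul, smul_add, map_add, hx, hy]
  | add x y hx hy => simp only [add_tmul, map_add, hx, hy]

lemma comp_mul_eq_of_map_ttMul (γ : B →ₗ[k] A ⊗[k] B)
    (hγ : ∀ b b' : B, γ (m (b ⊗ₜ b')) = ttMul k R' m' (γ b ⊗ₜ γ b'))
    (hγR : ∀ (b : B) (a : A), mulRightA R' (γ b ⊗ₜ a) = φtw k γ (R (b ⊗ₜ a))) :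
    γ ∘ₗ m = TensorProduct.map (mul' k A) m'
      ∘ₗ (TensorProduct.assoc k (A ⊗[k] A) B B).toLinearMap
      ∘ₗ rTensor B (TensorProduct.assoc k A A B).symm.toLinearMap
      ∘ₗ rTensor B (lTensor A γ) ∘ₗ rTensor B R
      ∘ₗ (TensorProduct.assoc k B A B).symm.toLinearMap ∘ₗ lTensor B γ := by
  refine TensorProduct.ext' fun b b' => ?_
  simp only [coe_comp, Function.comp_apply, lTensor_tmul, LinearEquiv.coe_coe, hγ]
  induction γ b' using TensorProduct.induction_on with
  | zero => simp
  | tmul c d =>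
    rw [TensorProduct.assoc_symm_tmul, rTensor_tmul, map_mul'_assoc_rTensor_tmul,
      ttMul_tmul_right, hγR]
  | add x y hx hy => simp only [tmul_add, map_add, hx, hy]

theorem exists_twistingPair_of_equiv {e : B} (hR : IsTwisting k R m e)
    (hR' : IsTwisting k R' m' e) (hm_l : ∀ b : B, m (e ⊗ₜ b) = b)
    (hm_r : ∀ b : B, m (b ⊗ₜ e) = b) (hm'_l : ∀ b : B, m' (e ⊗ₜ b) = b)
    (hm'_r : ∀ b : B, m' (b ⊗ₜ e) = b) (φ : (A ⊗[k] B) ≃ₗ[k] A ⊗[k] B)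
    (hmul : ∀ x y : A ⊗[k] B, φ (ttMul k R' m' (x ⊗ₜ y)) = ttMul k R m (φ x ⊗ₜ φ y))
    (hunit : ∀ a : A, φ (a ⊗ₜ e) = a ⊗ₜ e) :
    ∃ θ γ : B →ₗ[k] A ⊗[k] B,
      (∀ b b' : B, θ (m' (b ⊗ₜ b')) = ttMul k R m (θ b ⊗ₜ θ b')) ∧
      θ e = (1 : A) ⊗ₜ e ∧
      γ e = (1 : A) ⊗ₜ e ∧
      (γ ∘ₗ m = TensorProduct.map (mul' k A) m'
          ∘ₗ (TensorProduct.assoc k (A ⊗[k] A) B B).toLinearMap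
          ∘ₗ rTensor B (TensorProduct.assoc k A A B).symm.toLinearMap
          ∘ₗ rTensor B (lTensor A γ) ∘ₗ rTensor B R
          ∘ₗ (TensorProduct.assoc k B A B).symm.toLinearMap ∘ₗ lTensor B γ) ∧
      (muls2 k A B ∘ₗ lTensor A γ ∘ₗ θ = TensorProduct.mk k A B 1) ∧
      (muls2 k A B ∘ₗ lTensor A θ ∘ₗ γ = TensorProduct.mk k A B 1) ∧
      R' = Rtw k R θ γ := by
  have hmul_symm (x y : A ⊗[k] B) :
      φ.symm (ttMul k R m (x ⊗ₜ y)) = ttMul k R' m' (φ.symm x ⊗ₜ φ.symm y) := by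
    rw [φ.symm_apply_eq, hmul, φ.apply_symm_apply, φ.apply_symm_apply]
  have hunit_symm (a : A) : φ.symm (a ⊗ₜ e) = a ⊗ₜ e := by rw [φ.symm_apply_eq, hunit]
  set θ := φ.toLinearMap ∘ₗ TensorProduct.mk k A B 1
  set γ := φ.symm.toLinearMap ∘ₗ TensorProduct.mk k A B 1
  have hφ : φ.toLinearMap = φtw k θ := eq_φtw_of_map_smul _
    (map_smul_of_map_ttMul R R' m m' hR.unit_left hm_l hR'.unit_left hm'_l _ hmul hunit)
  have hφ_symm : φ.symm.toLinearMap = φtw k γ := eq_φtw_of_map_smul _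
    (map_smul_of_map_ttMul R' R m' m hR'.unit_left hm'_l hR.unit_left hm_l _ hmul_symm
      hunit_symm)
  refine ⟨θ, γ, fun b b' => ?_, hunit 1, hunit_symm 1, ?_, ?_, ?_, ?_⟩
  · simp only [θ, coe_comp, Function.comp_apply, mk_apply, LinearEquiv.coe_coe]
    rw [← ttMul_one_tmul_one_tmul R' m' hR'.unit_right, hmul]
  · refine comp_mul_eq_of_map_ttMul R R' m m' γ (fun b b' => ?_) (fun b a => ?_)
    · simp only [γ, coe_comp, Function.comp_apply, mk_apply, LinearEquiv.coe_coe]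
      rw [← ttMul_one_tmul_one_tmul R m hR.unit_right, hmul_symm]
    · rw [← mulRightA_one_tmul R, ← hφ_symm]
      exact (map_mulRightA_of_map_ttMul R' R m' m hm'_r hm_r _ hmul_symm hunit_symm _ a).symm
  · change φtw k γ ∘ₗ θ = _
    rw [← hφ_symm]
    ext b
    simp [θ]
  · change φtw k θ ∘ₗ γ = _
    rw [← hφ]
    ext b
    simp [γ]
  · refine TensorProduct.ext' fun b a => ?_
    rw [Rtw_tmul, ← hφ_symm, LinearEquiv.coe_coe, ← mulRightA_one_tmul R',
      LinearEquiv.eq_symm_apply]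
    exact map_mulRightA_of_map_ttMul R R' m m' hm_r hm'_r φ.toLinearMap hmul hunit _ a

theorem exists_equiv_of_twistingPair {e : B} (hR : IsTwisting k R m e)
    (θ γ : B →ₗ[k] A ⊗[k] B)
    (hθ : ∀ b b' : B, θ (m' (b ⊗ₜ b')) = ttMul k R m (θ b ⊗ₜ θ b'))
    (hθe : θ e = (1 : A) ⊗ₜ e)
    (hγθ : muls2 k A B ∘ₗ lTensor A γ ∘ₗ θ = TensorProduct.mk k A B 1)
    (hθγ : muls2 k A B ∘ₗ lTensor A θ ∘ₗ γ = TensorProduct.mk k A B 1) :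
    ∃ φ : (A ⊗[k] B) ≃ₗ[k] A ⊗[k] B,
      (∀ x y : A ⊗[k] B,
        φ (ttMul k (Rtw k R θ γ) m' (x ⊗ₜ y)) = ttMul k R m (φ x ⊗ₜ φ y)) ∧
      (∀ a : A, φ (a ⊗ₜ e) = a ⊗ₜ e) := by
  have hθγ' : φtw k θ ∘ₗ φtw k γ = LinearMap.id := by
    rw [φtw_comp_φtw, show φtw k θ ∘ₗ γ = _ from hθγ, φtw_mk_one]
  have hγθ' : φtw k γ ∘ₗ φtw k θ = LinearMap.id := by
    rw [φtw_comp_φtw, show φtw k γ ∘ₗ θ = _ from hγθ, φtw_mk_one]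
  refine ⟨LinearEquiv.ofLinearMap (φtw k θ) (φtw k γ) hθγ' hγθ',
    φtw_ttMul_Rtw R m m' hR θ γ hθ hθγ', fun a => ?_⟩
  rw [LinearEquiv.coe_ofLinearMap, φtw_tmul, hθe, smul_tmul', smul_eq_mul, mul_one]

end Equivalence

end Paper

theorem statement13_general {k A B : Type u} [Field k] [Ring A] [Algebra k A]
    [AddCommGroup B] [Module k B] (e : B) (m m' : B ⊗[k] B →ₗ[k] B)
    (hm_l : ∀ b : B, m (e ⊗ₜ b) = b) (hm_r : ∀ b : B, m (b ⊗ₜ e) = b)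
    (hm'_l : ∀ b : B, m' (e ⊗ₜ b) = b) (hm'_r : ∀ b : B, m' (b ⊗ₜ e) = b)
    (R R' : B ⊗[k] A →ₗ[k] A ⊗[k] B)
    (hR : IsTwisting k R m e) (hR' : IsTwisting k R' m' e) :
    (∃ φ : (A ⊗[k] B) ≃ₗ[k] A ⊗[k] B,
      (∀ x y : A ⊗[k] B, φ (ttMul k R' m' (x ⊗ₜ y)) = ttMul k R m (φ x ⊗ₜ φ y)) ∧
      (∀ a : A, φ (a ⊗ₜ e) = a ⊗ₜ e)) ↔
    (∃ θ γ : B →ₗ[k] A ⊗[k] B,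
      (∀ b b' : B, θ (m' (b ⊗ₜ b')) = ttMul k R m (θ b ⊗ₜ θ b')) ∧
      θ e = (1 : A) ⊗ₜ e ∧
      γ e = (1 : A) ⊗ₜ e ∧
      (γ ∘ₗ m = TensorProduct.map (mul' k A) m'
          ∘ₗ (TensorProduct.assoc k (A ⊗[k] A) B B).toLinearMap
          ∘ₗ rTensor B (TensorProduct.assoc k A A B).symm.toLinearMap
          ∘ₗ rTensor B (lTensor A γ) ∘ₗ rTensor B R
          ∘ₗ (TensorProduct.assoc k B A B).symm.toLinearMap ∘ₗ lTensor B γ) ∧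
      (muls2 k A B ∘ₗ lTensor A γ ∘ₗ θ = TensorProduct.mk k A B 1) ∧
      (muls2 k A B ∘ₗ lTensor A θ ∘ₗ γ = TensorProduct.mk k A B 1) ∧
      R' = Rtw k R θ γ) := by
  constructor
  · rintro ⟨φ, hmul, hunit⟩
    exact exists_twistingPair_of_equiv R R' m m' hR hR' hm_l hm_r hm'_l hm'_r φ hmul hunit
  · rintro ⟨θ, γ, hθ, hθe, -, -, hγθ, hθγ, rfl⟩
    exact exists_equiv_of_twistingPair R m m' hR θ γ hθ hθe hγθ hθγ

/-- characterization of `A`-equivalence of twisted tensor products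
`A ⊗_R B` and `A ⊗_{R'} B'` for two algebra structures `m`, `m'` on `B` with common
unit `e`. -/
theorem statement13 {k A B : Type u} [Field k] [Ring A] [Algebra k A]
    [AddCommGroup B] [Module k B] (e : B) (m m' : B ⊗[k] B →ₗ[k] B)
    (hm_assoc : m ∘ₗ rTensor B m
      = m ∘ₗ lTensor B m ∘ₗ (TensorProduct.assoc k B B B).toLinearMap)
    (hm_l : ∀ b : B, m (e ⊗ₜ b) = b) (hm_r : ∀ b : B, m (b ⊗ₜ e) = b)
    (hm'_assoc : m' ∘ₗ rTensor B m'
      = m' ∘ₗ lTensor B m' ∘ₗ (TensorProduct.assoc k B B B).toLinearMap)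
    (hm'_l : ∀ b : B, m' (e ⊗ₜ b) = b) (hm'_r : ∀ b : B, m' (b ⊗ₜ e) = b)
    (R R' : B ⊗[k] A →ₗ[k] A ⊗[k] B)
    (hR : IsTwisting k R m e) (hR' : IsTwisting k R' m' e) :
    (∃ φ : (A ⊗[k] B) ≃ₗ[k] A ⊗[k] B,
      (∀ x y : A ⊗[k] B, φ (ttMul k R' m' (x ⊗ₜ y)) = ttMul k R m (φ x ⊗ₜ φ y)) ∧
      (∀ a : A, φ (a ⊗ₜ e) = a ⊗ₜ e)) ↔
    (∃ θ γ : B →ₗ[k] A ⊗[k] B,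
      (∀ b b' : B, θ (m' (b ⊗ₜ b')) = ttMul k R m (θ b ⊗ₜ θ b')) ∧
      θ e = (1 : A) ⊗ₜ e ∧
      γ e = (1 : A) ⊗ₜ e ∧
      (γ ∘ₗ m = TensorProduct.map (mul' k A) m'
          ∘ₗ (TensorProduct.assoc k (A ⊗[k] A) B B).toLinearMap
          ∘ₗ rTensor B (TensorProduct.assoc k A A B).symm.toLinearMap
          ∘ₗ rTensor B (lTensor A γ) ∘ₗ rTensor B R
          ∘ₗ (TensorProduct.assoc k B A B).symm.toLinearMap ∘ₗ lTensor B γ) ∧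
      (muls2 k A B ∘ₗ lTensor A γ ∘ₗ θ = TensorProduct.mk k A B 1) ∧
      (muls2 k A B ∘ₗ lTensor A θ ∘ₗ γ = TensorProduct.mk k A B 1) ∧
      R' = Rtw k R θ γ) :=
  statement13_general e m m' hm_l hm_r hm'_l hm'_r R R' hR hR'
end
end

section
/- In the setting of the previous construction, the comultiplication Δ' of the crossed coproduct A_{W',ρ'}⊗C (given by Δ' = (id_A⊗W'⊗id_C)∘(ρ'⊗Δ_C)∘(id_A⊗Δ_C)) is given explicitly by Δ'(a⊗c) = (a₁ c₁_{<-1>₁} c₁_{<0>_{\{-1\}}} ⊗ c₁_{<0>_{\{0\}}}) ⊗ (a₂ c₁_{<-1>₂} c₂_{\{-1\}} ⊗ c₂_{\{0\}}); equivalently, Δ' = (φ⁻¹ ⊗ φ⁻¹)∘Δ∘φ, where Δ(a⊗c) = (a₁⊗c₁)⊗(a₂⊗c₂) is the tensor product comultiplication and φ(a⊗c) = a c_{<-1>} ⊗ c_{<0>}, φ⁻¹(a⊗c) = a c_{\{-1\}} ⊗ c_{\{0\}}. -/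
open TensorProduct LinearMap Coalgebra

noncomputable section

universe u
open Paper

/-! Both `ρ'` and `W'` are left `A`-linear, so `Δ'(a ⊗ c) = Δ(a) · Δ'(1 ⊗ c)`; since `Δ_A` is
multiplicative and `φ⁻¹` is left `A`-linear, the same holds for `(φ⁻¹ ⊗ φ⁻¹) ∘ Δ ∘ φ`. Both
identities are thereby reduced to identities of maps `C → (A ⊗ C) ⊗ (A ⊗ C)`. For
`(φ⁻¹ ⊗ φ⁻¹) ∘ Δ ∘ φ` the comodule property of `θ` gives the explicit formula directly. For `Δ'`
one uses the comodule properties of `θ` and `γ` together with the cancellation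
`g(c₁) c₂_{<-1>} ⊗ c₂_{<0>} = 1 ⊗ c`, where `g(c) = ε_C(c_{{0}}) c_{{-1}}`: by the comodule
property of `γ`, `g(c₁) ⊗ c₂ = γ(c)`, and then (cros3) applies. -/

namespace Paper

section Algebra

variable {k A V : Type u} [Field k] [Ring A] [Algebra k A] [AddCommGroup V] [Module k V]

theorem φtw_comp_muls2 (γ : V →ₗ[k] A ⊗[k] V) :
    φtw k γ ∘ₗ muls2 k A V = muls2 k A V ∘ₗ lTensor A (φtw k γ) := by
  ext a b c
  simp only [AlgebraTensorModule.curry_apply, curry_apply, restrictScalars_apply, comp_apply,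
    lTensor_tmul, φtw, muls2, LinearEquiv.coe_coe, TensorProduct.assoc_symm_tmul, rTensor_tmul,
    mul'_apply]
  generalize γ c = x
  induction x using TensorProduct.induction_on with
  | zero => simp only [tmul_zero, map_zero]
  | add x y hx hy => simp only [tmul_add, map_add, hx, hy]
  | tmul a' c' => simp [mul_assoc]

end Algebra

section Actions

variable {k A C : Type u} [Field k] [Ring A] [Algebra k A] [AddCommGroup C] [Module k C]

/-- `(α ⊗ β) ⊗ (x ⊗ y) ↦ α x ⊗ β y`. -/
def actPair :
    (A ⊗[k] A) ⊗[k] ((A ⊗[k] C) ⊗[k] (A ⊗[k] C)) →ₗ[k] (A ⊗[k] C) ⊗[k] (A ⊗[k] C) :=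
  TensorProduct.map (muls2 k A C) (muls2 k A C)
    ∘ₗ (tensorTensorTensorComm k A A (A ⊗[k] C) (A ⊗[k] C)).toLinearMap

/-- `(α ⊗ β) ⊗ ((x ⊗ c) ⊗ b) ↦ (α x ⊗ c) ⊗ β b`. -/
def actPairA : (A ⊗[k] A) ⊗[k] ((A ⊗[k] C) ⊗[k] A) →ₗ[k] (A ⊗[k] C) ⊗[k] A :=
  TensorProduct.map (muls2 k A C) (mul' k A)
    ∘ₗ (tensorTensorTensorComm k A A (A ⊗[k] C) A).toLinearMap

/-- `a ⊗ (c ⊗ b) ↦ c ⊗ a b`. -/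
def actCA : A ⊗[k] (C ⊗[k] A) →ₗ[k] C ⊗[k] A :=
  lTensor C (mul' k A) ∘ₗ (TensorProduct.assoc k C A A).toLinearMap
    ∘ₗ rTensor A (TensorProduct.comm k A C).toLinearMap
    ∘ₗ (TensorProduct.assoc k A C A).symm.toLinearMap

/-- `(α ⊗ β) ⊗ (c ⊗ y) ↦ (α ⊗ c) ⊗ β y`. -/
def actSplit : (A ⊗[k] A) ⊗[k] (C ⊗[k] (A ⊗[k] C)) →ₗ[k] (A ⊗[k] C) ⊗[k] (A ⊗[k] C) :=
  lTensor (A ⊗[k] C) (muls2 k A C) ∘ₗ (tensorTensorTensorComm k A A C (A ⊗[k] C)).toLinearMap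

/-- `(x ⊗ c) ⊗ y ↦ c ⊗ x y`. -/
def flipMul : (A ⊗[k] C) ⊗[k] (A ⊗[k] C) →ₗ[k] C ⊗[k] (A ⊗[k] C) :=
  lTensor C (muls2 k A C) ∘ₗ (TensorProduct.assoc k C A (A ⊗[k] C)).toLinearMap
    ∘ₗ rTensor (A ⊗[k] C) (TensorProduct.comm k A C).toLinearMap

/-- `(p ⊗ r) ⊗ (x ⊗ c) ↦ (p ⊗ c) ⊗ r x`. -/
def swapMul : (A ⊗[k] A) ⊗[k] (A ⊗[k] C) →ₗ[k] (A ⊗[k] C) ⊗[k] A :=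
  (TensorProduct.assoc k A C A).symm.toLinearMap
    ∘ₗ lTensor A ((TensorProduct.comm k A C).toLinearMap ∘ₗ muls2 k A C)
    ∘ₗ (TensorProduct.assoc k A A (A ⊗[k] C)).toLinearMap

theorem map_φtw_comp_actPair (γ : C →ₗ[k] A ⊗[k] C) :
    TensorProduct.map (φtw k γ) (φtw k γ) ∘ₗ actPair
      = actPair ∘ₗ lTensor (A ⊗[k] A) (TensorProduct.map (φtw k γ) (φtw k γ)) := by
  rw [actPair, ← comp_assoc, ← map_comp, φtw_comp_muls2, map_comp, comp_assoc]
  simp only [lTensor_def]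
  rw [← tensorTensorTensorComm_comp_map, map_id, comp_assoc]

end Actions

variable {k A C : Type u} [Field k] [Ring A] [Bialgebra k A] [AddCommGroup C] [Module k C]

theorem map_φtw_comp_comul_comp_assoc_rTensor (θ γ : C →ₗ[k] A ⊗[k] C) :
    TensorProduct.map (φtw k γ) (φtw k γ) ∘ₗ (tensorTensorTensorComm k A A C C).toLinearMap
      ∘ₗ rTensor (C ⊗[k] C) comul ∘ₗ (TensorProduct.assoc k A C C).toLinearMap
      ∘ₗ rTensor C θ
    = lTensor (A ⊗[k] C) (muls2 k A C)
      ∘ₗ (TensorProduct.assoc k (A ⊗[k] C) A (A ⊗[k] C)).toLinearMap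
      ∘ₗ TensorProduct.map (eAux k θ γ) γ := by
  ext c₁ c₂
  simp only [AlgebraTensorModule.curry_apply, curry_apply, restrictScalars_apply, comp_apply,
    rTensor_tmul, TensorProduct.map_tmul, eAux]
  induction θ c₁ using TensorProduct.induction_on with
  | zero => simp only [zero_tmul, map_zero]
  | add x x' hx hx' => simp only [add_tmul, map_add, hx, hx']
  | tmul a e =>
    simp only [LinearEquiv.coe_coe, TensorProduct.assoc_tmul, rTensor_tmul, TensorProduct.map_tmul]
    induction comul (R := k) a using TensorProduct.induction_on with
    | zero => simp only [zero_tmul, map_zero]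
    | add x x' hx hx' => simp only [add_tmul, map_add, hx, hx']
    | tmul a₁ a₂ =>
      simp only [φtw, muls2, tensorTensorTensorComm_tmul, TensorProduct.map_tmul, comp_apply,
        lTensor_tmul]
      induction γ e using TensorProduct.induction_on with
      | zero => simp only [zero_tmul, tmul_zero, map_zero]
      | add x x' hx hx' => simp only [add_tmul, tmul_add, map_add, hx, hx']
      | tmul b e' =>
        induction γ c₂ using TensorProduct.induction_on with
        | zero => simp only [tmul_zero, map_zero]
        | add x x' hx hx' => simp only [tmul_add, map_add, hx, hx']
        | tmul b' e'' => simp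

variable [Coalgebra k C]

theorem rTensor_comp_comul_of_comodCond {γ : C →ₗ[k] A ⊗[k] C} (hγ : ComodCond k γ) :
    rTensor C γ ∘ₗ comul
      = (TensorProduct.assoc k A C C).symm.toLinearMap ∘ₗ lTensor A comul ∘ₗ γ := by
  rw [hγ, ← comp_assoc, ← LinearEquiv.coe_trans, LinearEquiv.self_trans_symm]
  rfl

theorem rTensor_g0_comp_comul {γ : C →ₗ[k] A ⊗[k] C} (hγ : ComodCond k γ) :
    rTensor C (g0 k A C ∘ₗ γ) ∘ₗ comul = γ := by
  have hg0 : rTensor C (g0 k A C) ∘ₗ (TensorProduct.assoc k A C C).symm.toLinearMap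
      = lTensor A ((TensorProduct.lid k C).toLinearMap ∘ₗ rTensor C counit) := by
    ext a c c'
    simp [g0, smul_tmul]
  calc rTensor C (g0 k A C ∘ₗ γ) ∘ₗ comul
      = (rTensor C (g0 k A C) ∘ₗ (TensorProduct.assoc k A C C).symm.toLinearMap)
          ∘ₗ lTensor A comul ∘ₗ γ := by
        rw [rTensor_comp, comp_assoc, rTensor_comp_comul_of_comodCond hγ, comp_assoc]
    _ = γ := by
        rw [hg0, ← comp_assoc, ← lTensor_comp, comp_assoc, rTensor_counit_comp_comul]
        conv_rhs => rw [← id_comp γ]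
        congr 1
        ext c
        simp

theorem comul_comp_muls2 :
    comul ∘ₗ muls2 k A C = actPair ∘ₗ TensorProduct.map comul (comul (A := A ⊗[k] C)) := by
  ext a b c
  simp only [AlgebraTensorModule.curry_apply, curry_apply, restrictScalars_apply, comp_apply,
    muls2, actPair, LinearEquiv.coe_coe, TensorProduct.assoc_symm_tmul, rTensor_tmul, mul'_apply,
    TensorProduct.map_tmul, TensorProduct.comul_tmul, Bialgebra.comul_mul]
  generalize comul (R := k) a = α, comul (R := k) b = β, comul (R := k) c = δ
  induction α using TensorProduct.induction_on with
  | zero => simp only [zero_mul, zero_tmul, map_zero]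
  | add x y hx hy => simp only [add_mul, add_tmul, map_add, hx, hy]
  | tmul a₁ a₂ =>
    induction β using TensorProduct.induction_on with
    | zero => simp only [mul_zero, zero_tmul, tmul_zero, map_zero]
    | add x y hx hy => simp only [mul_add, add_tmul, tmul_add, map_add, hx, hy]
    | tmul b₁ b₂ =>
      induction δ using TensorProduct.induction_on with
      | zero => simp only [tmul_zero, map_zero]
      | add x y hx hy => simp only [tmul_add, map_add, hx, hy]
      | tmul c₁ c₂ => simp

theorem map_φtw_comp_comul_comp_φtw (θ γ : C →ₗ[k] A ⊗[k] C) :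
    TensorProduct.map (φtw k γ) (φtw k γ) ∘ₗ comul ∘ₗ φtw k θ
      = actPair ∘ₗ TensorProduct.map comul
          (TensorProduct.map (φtw k γ) (φtw k γ) ∘ₗ comul ∘ₗ θ) := by
  calc TensorProduct.map (φtw k γ) (φtw k γ) ∘ₗ comul ∘ₗ muls2 k A C ∘ₗ lTensor A θ
      = (TensorProduct.map (φtw k γ) (φtw k γ) ∘ₗ actPair)
          ∘ₗ TensorProduct.map comul comul ∘ₗ lTensor A θ := by
        simp only [← comp_assoc, comul_comp_muls2]
    _ = _ := by
        rw [map_φtw_comp_actPair, comp_assoc, ← comp_assoc _ (TensorProduct.map _ _),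
          lTensor_comp_map, map_comp_lTensor, comp_assoc]

theorem map_φtw_comp_comul_comp_eq_dAux {θ : C →ₗ[k] A ⊗[k] C} (hθ : ComodCond k θ)
    (γ : C →ₗ[k] A ⊗[k] C) :
    TensorProduct.map (φtw k γ) (φtw k γ) ∘ₗ comul ∘ₗ θ = dAux k θ γ := by
  have hcomul : (comul : A ⊗[k] C →ₗ[k] _) = (tensorTensorTensorComm k A A C C).toLinearMap
      ∘ₗ rTensor (C ⊗[k] C) comul ∘ₗ lTensor A comul := by
    rw [rTensor_comp_lTensor]; rfl
  calc _ = (TensorProduct.map (φtw k γ) (φtw k γ)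
        ∘ₗ (tensorTensorTensorComm k A A C C).toLinearMap ∘ₗ rTensor (C ⊗[k] C) comul
        ∘ₗ (TensorProduct.assoc k A C C).toLinearMap ∘ₗ rTensor C θ) ∘ₗ comul := by
        rw [hcomul]; simp only [comp_assoc]; rw [← hθ]
    _ = dAux k θ γ := by
        rw [map_φtw_comp_comul_comp_assoc_rTensor, dAux]; simp only [comp_assoc]

theorem coDelta_actCA_mulPair (w : C →ₗ[k] C ⊗[k] A) (κ : C →ₗ[k] A ⊗[k] A) :
    coDelta k (actCA ∘ₗ lTensor A w) (mulPair k ∘ₗ TensorProduct.map comul κ)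
      = actPair ∘ₗ TensorProduct.map comul (actSplit ∘ₗ TensorProduct.map κ
          ((TensorProduct.assoc k C A C).toLinearMap ∘ₗ rTensor C w ∘ₗ comul) ∘ₗ comul) := by
  ext a c
  simp only [AlgebraTensorModule.curry_apply, curry_apply, restrictScalars_apply, comp_apply,
    coDelta, lTensor_tmul, TensorProduct.map_tmul, LinearEquiv.coe_coe]
  induction comul (R := k) c using TensorProduct.induction_on with
  | zero => simp only [tmul_zero, map_zero]
  | add x y hx hy => simp only [tmul_add, map_add, hx, hy]
  | tmul c₁ c₂ =>
    simp only [TensorProduct.assoc_symm_tmul, TensorProduct.map_tmul, comp_apply]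
    induction comul (R := k) a using TensorProduct.induction_on with
    | zero => simp only [zero_tmul, map_zero]
    | add x y hx hy => simp only [add_tmul, map_add, hx, hy]
    | tmul a₁ a₂ =>
      induction κ c₁ using TensorProduct.induction_on with
      | zero => simp only [zero_tmul, tmul_zero, map_zero, mulPair, LinearEquiv.coe_coe]
      | add x y hx hy => simp only [tmul_add, add_tmul, map_add, hx, hy]
      | tmul κ₁ κ₂ =>
        induction comul (R := k) c₂ using TensorProduct.induction_on with
        | zero => simp only [tmul_zero, map_zero, mulPair, comp_apply,
            TensorProduct.map_tmul, tensorTensorTensorComm_tmul, LinearEquiv.coe_coe]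
        | add x y hx hy => simp only [tmul_add, map_add, hx, hy]
        | tmul d e =>
          simp only [mulPair, comp_apply, TensorProduct.map_tmul, tensorTensorTensorComm_tmul,
            LinearEquiv.coe_coe, mul'_apply, TensorProduct.assoc_tmul,
            TensorProduct.assoc_symm_tmul, lTensor_tmul, rTensor_tmul]
          induction w d using TensorProduct.induction_on with
          | zero => simp only [zero_tmul, tmul_zero, map_zero]
          | add x y hx hy => simp only [tmul_add, add_tmul, map_add, hx, hy]
          | tmul f b =>
            simp [actCA, actSplit, actPair, muls2, mul_assoc]

def wCore (θ γ : C →ₗ[k] A ⊗[k] C) : C →ₗ[k] C ⊗[k] A :=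
  actCA ∘ₗ lTensor A (lTensor C (g0 k A C ∘ₗ γ) ∘ₗ comul) ∘ₗ θ

theorem Wtw_eq_actCA (θ γ : C →ₗ[k] A ⊗[k] C) :
    Wtw k θ γ LinearMap.id = actCA ∘ₗ lTensor A (wCore θ γ) := by
  have hassoc : actCA ∘ₗ rTensor (C ⊗[k] A) (mul' k A)
      ∘ₗ (TensorProduct.assoc k A A (C ⊗[k] A)).symm.toLinearMap
      = actCA (k := k) (A := A) (C := C) ∘ₗ lTensor A actCA := by
    ext a b c z
    simp [actCA, mul_assoc]
  conv_rhs => rw [wCore, lTensor_comp, ← comp_assoc, ← hassoc]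
  rfl

theorem assoc_comp_rTensor_wCore_comp_comul {θ γ : C →ₗ[k] A ⊗[k] C} (hθ : ComodCond k θ)
    (hγ : ComodCond k γ) :
    (TensorProduct.assoc k C A C).toLinearMap ∘ₗ rTensor C (wCore θ γ) ∘ₗ comul
      = flipMul ∘ₗ TensorProduct.map θ γ ∘ₗ comul := by
  have hw : wCore θ γ = (actCA ∘ₗ lTensor A (lTensor C (g0 k A C ∘ₗ γ))
      ∘ₗ (TensorProduct.assoc k A C C).toLinearMap ∘ₗ rTensor C θ) ∘ₗ comul := by
    rw [wCore, lTensor_comp]; simp only [comp_assoc]; rw [hθ]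
  have hstruct : (TensorProduct.assoc k C A C).toLinearMap
      ∘ₗ rTensor C (actCA ∘ₗ lTensor A (lTensor C (g0 k A C ∘ₗ γ))
        ∘ₗ (TensorProduct.assoc k A C C).toLinearMap ∘ₗ rTensor C θ)
      ∘ₗ (TensorProduct.assoc k C C C).symm.toLinearMap
      = flipMul ∘ₗ TensorProduct.map θ (rTensor C (g0 k A C ∘ₗ γ)) := by
    ext c₁ c₂ c₃
    simp only [AlgebraTensorModule.curry_apply, curry_apply, restrictScalars_apply, comp_apply,
      LinearEquiv.coe_coe, TensorProduct.assoc_symm_tmul, rTensor_tmul, TensorProduct.map_tmul]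
    induction θ c₁ using TensorProduct.induction_on with
    | zero => simp only [zero_tmul, map_zero]
    | add x y hx hy => simp only [add_tmul, map_add, hx, hy]
    | tmul x e => simp [actCA, flipMul, muls2]
  calc _ = ((TensorProduct.assoc k C A C).toLinearMap
      ∘ₗ rTensor C (actCA ∘ₗ lTensor A (lTensor C (g0 k A C ∘ₗ γ))
        ∘ₗ (TensorProduct.assoc k A C C).toLinearMap ∘ₗ rTensor C θ)
      ∘ₗ (TensorProduct.assoc k C C C).symm.toLinearMap) ∘ₗ lTensor C comul ∘ₗ comul := by
        rw [hw, rTensor_comp, comp_assoc, comp_assoc, ← coassoc_symm]; simp only [comp_assoc]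
    _ = _ := by
        rw [hstruct, comp_assoc, ← comp_assoc _ (lTensor C comul), map_comp_lTensor,
          rTensor_g0_comp_comul hγ]

theorem swapMul_comp_map_lamAux_comp_comul {θ γ : C →ₗ[k] A ⊗[k] C} (hγ : ComodCond k γ)
    (hγθ : muls2 k A C ∘ₗ lTensor A θ ∘ₗ γ = TensorProduct.mk k A C 1) :
    swapMul ∘ₗ TensorProduct.map (lamAux k γ) θ ∘ₗ comul
      = (TensorProduct.mk k (A ⊗[k] C) A).flip 1 ∘ₗ γ := by
  have hunit : (TensorProduct.assoc k A C A).symm.toLinearMap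
      ∘ₗ lTensor A ((TensorProduct.comm k A C).toLinearMap ∘ₗ TensorProduct.mk k A C 1)
      = (TensorProduct.mk k (A ⊗[k] C) A).flip 1 := by
    ext a c; simp
  have hswap : swapMul ∘ₗ TensorProduct.map (lTensor A (g0 k A C ∘ₗ γ)) θ
      = (TensorProduct.assoc k A C A).symm.toLinearMap
          ∘ₗ lTensor A ((TensorProduct.comm k A C).toLinearMap ∘ₗ muls2 k A C
            ∘ₗ TensorProduct.map (g0 k A C ∘ₗ γ) θ)
          ∘ₗ (TensorProduct.assoc k A C C).toLinearMap := by
    ext a c c'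
    simp only [AlgebraTensorModule.curry_apply, curry_apply, restrictScalars_apply, comp_apply,
      TensorProduct.map_tmul, LinearEquiv.coe_coe, TensorProduct.assoc_tmul, lTensor_tmul]
    induction θ c' using TensorProduct.induction_on with
    | zero => simp only [tmul_zero, map_zero]
    | add x y hx hy => simp only [tmul_add, map_add, hx, hy]
    | tmul x e => simp [swapMul, muls2]
  calc swapMul ∘ₗ TensorProduct.map (lTensor A (g0 k A C ∘ₗ γ) ∘ₗ γ) θ ∘ₗ comul
      = (TensorProduct.assoc k A C A).symm.toLinearMap
          ∘ₗ lTensor A ((TensorProduct.comm k A C).toLinearMap ∘ₗ muls2 k A C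
            ∘ₗ TensorProduct.map (g0 k A C ∘ₗ γ) θ)
          ∘ₗ (TensorProduct.assoc k A C C).toLinearMap ∘ₗ rTensor C γ ∘ₗ comul := by
        rw [← map_comp_rTensor, ← comp_assoc, ← comp_assoc, hswap]; simp only [comp_assoc]
    _ = (TensorProduct.assoc k A C A).symm.toLinearMap
          ∘ₗ lTensor A ((TensorProduct.comm k A C).toLinearMap ∘ₗ muls2 k A C
            ∘ₗ lTensor A θ ∘ₗ rTensor C (g0 k A C ∘ₗ γ) ∘ₗ comul) ∘ₗ γ := by
        rw [← hγ, ← lTensor_comp_rTensor]; simp only [lTensor_comp, comp_assoc]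
    _ = _ := by rw [rTensor_g0_comp_comul hγ, hγθ, ← comp_assoc, hunit]

def dAuxWith (θ γ : C →ₗ[k] A ⊗[k] C) (N : C →ₗ[k] (A ⊗[k] C) ⊗[k] A) :
    C →ₗ[k] (A ⊗[k] C) ⊗[k] (A ⊗[k] C) :=
  lTensor (A ⊗[k] C) (muls2 k A C)
    ∘ₗ (TensorProduct.assoc k (A ⊗[k] C) A (A ⊗[k] C)).toLinearMap
    ∘ₗ TensorProduct.map (actPairA ∘ₗ TensorProduct.map comul N ∘ₗ θ) γ ∘ₗ comul

theorem dAux_eq_dAuxWith (θ γ : C →ₗ[k] A ⊗[k] C) :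
    dAux k θ γ = dAuxWith θ γ ((TensorProduct.mk k (A ⊗[k] C) A).flip 1 ∘ₗ γ) := by
  have heAux : eAux k θ γ
      = actPairA ∘ₗ TensorProduct.map comul ((TensorProduct.mk k (A ⊗[k] C) A).flip 1 ∘ₗ γ)
        ∘ₗ θ := by
    ext c
    simp only [eAux, comp_apply]
    induction θ c using TensorProduct.induction_on with
    | zero => simp only [map_zero]
    | add x y hx hy => simp only [map_add, hx, hy]
    | tmul a e =>
      simp only [TensorProduct.map_tmul, comp_apply, flip_apply, TensorProduct.mk_apply]
      induction comul (R := k) a using TensorProduct.induction_on with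
      | zero => simp only [zero_tmul, map_zero]
      | add x y hx hy => simp only [add_tmul, map_add, hx, hy]
      | tmul a₁ a₂ =>
        induction γ e using TensorProduct.induction_on with
        | zero => simp only [zero_tmul, tmul_zero, map_zero]
        | add x y hx hy => simp only [add_tmul, tmul_add, map_add, hx, hy]
        | tmul b f => simp [actPairA, muls2]
  rw [dAux, dAuxWith, heAux]

theorem actSplit_comp_map_kapAux_flipMul (θ γ : C →ₗ[k] A ⊗[k] C) :
    actSplit ∘ₗ TensorProduct.map (kapAux k θ γ) (flipMul ∘ₗ TensorProduct.map θ γ)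
      = lTensor (A ⊗[k] C) (muls2 k A C)
        ∘ₗ (TensorProduct.assoc k (A ⊗[k] C) A (A ⊗[k] C)).toLinearMap
        ∘ₗ TensorProduct.map (actPairA ∘ₗ TensorProduct.map comul
            (swapMul ∘ₗ TensorProduct.map (lamAux k γ) θ)
            ∘ₗ (TensorProduct.assoc k A C C).toLinearMap ∘ₗ rTensor C θ) γ
        ∘ₗ (TensorProduct.assoc k C C C).symm.toLinearMap := by
  ext c₁ c₂ c₃
  simp only [AlgebraTensorModule.curry_apply, curry_apply, restrictScalars_apply, comp_apply,
    LinearEquiv.coe_coe, TensorProduct.assoc_symm_tmul, TensorProduct.map_tmul, rTensor_tmul,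
    kapAux]
  induction θ c₁ using TensorProduct.induction_on with
  | zero => simp only [zero_tmul, map_zero]
  | add x y hx hy => simp only [add_tmul, map_add, hx, hy]
  | tmul x e =>
    simp only [TensorProduct.assoc_tmul, TensorProduct.map_tmul, comp_apply]
    induction comul (R := k) x using TensorProduct.induction_on with
    | zero => simp only [zero_tmul, map_zero]
    | add x y hx hy => simp only [add_tmul, map_add, hx, hy]
    | tmul x₁ x₂ =>
      induction lamAux k γ e using TensorProduct.induction_on with
      | zero => simp only [zero_tmul, tmul_zero, map_zero]
      | add x y hx hy => simp only [add_tmul, tmul_add, map_add, hx, hy]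
      | tmul p r =>
        induction θ c₂ using TensorProduct.induction_on with
        | zero => simp only [zero_tmul, tmul_zero, map_zero]
        | add x y hx hy => simp only [add_tmul, tmul_add, map_add, hx, hy]
        | tmul y f =>
          induction γ c₃ using TensorProduct.induction_on with
          | zero => simp only [tmul_zero, map_zero]
          | add x y hx hy => simp only [tmul_add, map_add, hx, hy]
          | tmul s t => simp [actPairA, actSplit, swapMul, flipMul, mulPair, muls2, mul_assoc]

theorem dAuxWith_swapMul {θ : C →ₗ[k] A ⊗[k] C} (hθ : ComodCond k θ) (γ : C →ₗ[k] A ⊗[k] C) :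
    dAuxWith θ γ (swapMul ∘ₗ TensorProduct.map (lamAux k γ) θ ∘ₗ comul)
      = actSplit ∘ₗ TensorProduct.map (kapAux k θ γ) (flipMul ∘ₗ TensorProduct.map θ γ ∘ₗ comul)
          ∘ₗ comul := by
  have hleg : actPairA ∘ₗ TensorProduct.map comul
        (swapMul ∘ₗ TensorProduct.map (lamAux k γ) θ ∘ₗ comul) ∘ₗ θ
      = (actPairA ∘ₗ TensorProduct.map comul (swapMul ∘ₗ TensorProduct.map (lamAux k γ) θ)
          ∘ₗ (TensorProduct.assoc k A C C).toLinearMap ∘ₗ rTensor C θ) ∘ₗ comul := by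
    rw [← comp_assoc (comul : C →ₗ[k] C ⊗[k] C), ← map_comp_lTensor]
    simp only [comp_assoc]
    rw [← hθ]
  calc _ = (lTensor (A ⊗[k] C) (muls2 k A C)
          ∘ₗ (TensorProduct.assoc k (A ⊗[k] C) A (A ⊗[k] C)).toLinearMap
          ∘ₗ TensorProduct.map (actPairA ∘ₗ TensorProduct.map comul
              (swapMul ∘ₗ TensorProduct.map (lamAux k γ) θ)
              ∘ₗ (TensorProduct.assoc k A C C).toLinearMap ∘ₗ rTensor C θ) γ
          ∘ₗ (TensorProduct.assoc k C C C).symm.toLinearMap) ∘ₗ lTensor C comul ∘ₗ comul := by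
        rw [dAuxWith, hleg, ← map_comp_rTensor]; simp only [comp_assoc]; rw [coassoc_symm]
    _ = _ := by
        rw [← actSplit_comp_map_kapAux_flipMul]; simp only [comp_assoc]; congr 1
        rw [← comp_assoc, map_comp_lTensor]; simp only [comp_assoc]

theorem coDelta_Wtw_ρtw_eq_deltaExplicit {θ γ : C →ₗ[k] A ⊗[k] C} (hθ : ComodCond k θ)
    (hγ : ComodCond k γ) (hγθ : muls2 k A C ∘ₗ lTensor A θ ∘ₗ γ = TensorProduct.mk k A C 1) :
    coDelta k (Wtw k θ γ LinearMap.id) (ρtw k θ γ) = deltaExplicit k θ γ := by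
  rw [Wtw_eq_actCA, ρtw, coDelta_actCA_mulPair, assoc_comp_rTensor_wCore_comp_comul hθ hγ,
    ← dAuxWith_swapMul hθ, swapMul_comp_map_lamAux_comp_comul hγ hγθ, ← dAux_eq_dAuxWith]
  rfl

end Paper

theorem statement15_general {k A C : Type u} [Field k] [Ring A] [Bialgebra k A]
    [AddCommGroup C] [Module k C] [Coalgebra k C] (eC : C)
    (R : C ⊗[k] A →ₗ[k] A ⊗[k] C) (σ : C ⊗[k] C →ₗ[k] A ⊗[k] C)
    (θ γ : C →ₗ[k] A ⊗[k] C)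
    (htw : TwistConditions k eC R σ θ γ) :
    coDelta k (Wtw k θ γ LinearMap.id) (ρtw k θ γ) = deltaExplicit k θ γ ∧
    coDelta k (Wtw k θ γ LinearMap.id) (ρtw k θ γ)
      = TensorProduct.map (φtw k γ) (φtw k γ)
          ∘ₗ Coalgebra.comul (R := k) (A := A ⊗[k] C) ∘ₗ φtw k θ := by
  obtain ⟨⟨-, -, -, hγθ⟩, -, -, -, hθ, hγ⟩ := htw
  have hΔ' := coDelta_Wtw_ρtw_eq_deltaExplicit hθ hγ hγθ
  refine ⟨hΔ', hΔ'.trans ?_⟩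
  rw [map_φtw_comp_comul_comp_φtw, map_φtw_comp_comul_comp_eq_dAux hθ]
  rfl

/-- the comultiplication of the crossed coproduct `A_{W',ρ'} ⊗ C` is given
by the explicit formula (deltaprim), and equals `(φ⁻¹ ⊗ φ⁻¹) ∘ Δ ∘ φ` for
`φ(a ⊗ c) = a c_{<-1>} ⊗ c_{<0>}`, `φ⁻¹(a ⊗ c) = a c_{{-1}} ⊗ c_{{0}}`. -/
theorem statement15 {k A C : Type u} [Field k] [Ring A] [Bialgebra k A]
    [AddCommGroup C] [Module k C] [Coalgebra k C] (eC : C)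
    (R : C ⊗[k] A →ₗ[k] A ⊗[k] C) (σ : C ⊗[k] C →ₗ[k] A ⊗[k] C)
    (hcross : IsCrossBialgebra0 k eC R σ)
    (θ γ : C →ₗ[k] A ⊗[k] C)
    (htw : TwistConditions k eC R σ θ γ) :
    coDelta k (Wtw k θ γ LinearMap.id) (ρtw k θ γ) = deltaExplicit k θ γ ∧
    coDelta k (Wtw k θ γ LinearMap.id) (ρtw k θ γ)
      = TensorProduct.map (φtw k γ) (φtw k γ)
          ∘ₗ Coalgebra.comul (R := k) (A := A ⊗[k] C) ∘ₗ φtw k θ :=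
  statement15_general eC R σ θ γ htw
end
end

section
/- Let H be a finite dimensional quasitriangular Hopf algebra with quasitriangular structure r = r¹ ⊗ r² ∈ H⊗H. The map φ : H* ⊗ H → D(H) defined by φ(p ⊗ h) = (p ↼ S⁻¹(r¹)) ⊗ r² h is bijective, satisfies φ(ε ⊗ h) = ε ⊗ h for all h ∈ H (so φ is a morphism of right H-modules, where H acts by right multiplication on the second tensor factor), and is a morphism of left H^{*cop}-comodules. -/
open TensorProduct LinearMap Coalgebra

noncomputable section

universe u
open Paper

/-!
Majid's map is the action of `r` through the algebra map `H ⊗ H → End(H* ⊗ H)`,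
`a ⊗ b ↦ (p ⊗ h ↦ (p ↼ S⁻¹ a) ⊗ b h)`, which is multiplicative because `↼` is a right action and
`S⁻¹` is an anti-homomorphism. The quasitriangularity axiom `(Δ ⊗ id) r = r₁₃ r₂₃` gives
`(S ⊗ id)(r) · r = 1`, so `φ` has a left inverse and is bijective by finite dimensionality.
The remaining properties are linear in `r` and hold for each `a ⊗ b`: left and right
multiplications commute, `ε ↼ c = ε(c) ε`, and `p ↦ p ↼ c` is a morphism of left
`H^{*cop}`-comodules since `(p ↼ c)(x y) = p (c x y)`.
-/

lemma LinearMap.commute_rTensor_lTensor {R M N : Type*} [CommSemiring R]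
    [AddCommMonoid M] [Module R M] [AddCommMonoid N] [Module R N]
    (f : Module.End R M) (g : Module.End R N) :
    Commute (Module.End.rTensorAlgHom R M N f) (Module.End.lTensorAlgHom R N M g) :=
  show rTensor N f ∘ₗ lTensor M g = lTensor M g ∘ₗ rTensor N f by
    rw [rTensor_comp_lTensor, lTensor_comp_rTensor]

lemma TensorProduct.dualDistrib_map_dualMap {R M N M' N' : Type*} [CommSemiring R]
    [AddCommMonoid M] [Module R M] [AddCommMonoid N] [Module R N]
    [AddCommMonoid M'] [Module R M'] [AddCommMonoid N'] [Module R N']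
    (f : M' →ₗ[R] M) (g : N' →ₗ[R] N) (t : Module.Dual R M ⊗[R] Module.Dual R N) :
    dualDistrib R M' N' (map f.dualMap g.dualMap t) = (map f g).dualMap (dualDistrib R M N t) := by
  induction t using TensorProduct.induction_on with
  | zero => simp
  | tmul p q => ext; simp
  | add t₁ t₂ h₁ h₂ => simp only [map_add, h₁, h₂]

lemma Bialgebra.dualMap_mulLeft_counit {R A : Type*} [CommSemiring R] [Semiring A]
    [Bialgebra R A] (c : A) :
    (mulLeft R c).dualMap (counit : Module.Dual R A)
      = counit (R := R) c • (counit : Module.Dual R A) := by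
  ext; simp [Bialgebra.counit_mul]

namespace HopfAlgebra

variable {R A : Type*} [CommSemiring R] [Semiring A] [HopfAlgebra R A] {Sinv : A →ₗ[R] A}

lemma inv_antipode_one (hS1 : Sinv ∘ₗ antipode R = LinearMap.id) : Sinv (1 : A) = 1 := by
  simpa using congr($hS1 1)

lemma inv_antipode_mul (hS1 : Sinv ∘ₗ antipode R = LinearMap.id)
    (hS2 : antipode R ∘ₗ Sinv = LinearMap.id) (a b : A) :
    Sinv (a * b) = Sinv b * Sinv a := by
  have hS : ∀ x, antipode R (Sinv x) = x := fun x => congr($hS2 x)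
  calc Sinv (a * b) = Sinv (antipode R (Sinv b * Sinv a)) := by
        rw [antipode_mul_antidistrib, hS, hS]
    _ = Sinv b * Sinv a := congr($hS1 _)

lemma counit_inv_antipode (hS2 : antipode R ∘ₗ Sinv = LinearMap.id) (a : A) :
    counit (R := R) (Sinv a) = counit a := by
  rw [← counit_antipode (R := R) (Sinv a), show antipode R (Sinv a) = a from congr($hS2 a)]

end HopfAlgebra

namespace Paper

open HopfAlgebra

variable {k H : Type u} [Field k] [Ring H] [HopfAlgebra k H]

lemma ract_tmul (p : Module.Dual k H) (c : H) :
    ract k H (p ⊗ₜ c) = (mulLeft k c).dualMap p := by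
  ext; simp [ract]

section DualComultiplication

variable [FiniteDimensional k H]

lemma dualDistrib_comulD (p : Module.Dual k H) :
    dualDistrib k H H (comulD k H p) = (mul' k H).dualMap p :=
  (dualDistribEquiv k H H).apply_symm_apply _

lemma comulD_comp_dualMap_mulLeft (c : H) :
    comulD k H ∘ₗ (mulLeft k c).dualMap = rTensor _ (mulLeft k c).dualMap ∘ₗ comulD k H := by
  ext p : 1
  apply (dualDistribEquiv k H H).injective
  show dualDistrib k H H _ = dualDistrib k H H _
  rw [comp_apply, comp_apply, rTensor, ← dualMap_id, dualDistrib_map_dualMap, dualDistrib_comulD,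
    dualDistrib_comulD]
  ext x y
  simp [mul_assoc]

lemma comulDcop_comp_dualMap_mulLeft (c : H) :
    comulDcop k H ∘ₗ (mulLeft k c).dualMap = lTensor _ (mulLeft k c).dualMap ∘ₗ comulDcop k H := by
  rw [comulDcop, comp_assoc, comulD_comp_dualMap_mulLeft, ← comp_assoc, ← comp_assoc]
  congr 1
  ext; simp

lemma coactD_comp_map_dualMap_mulLeft (c : H) (f : Module.End k H) :
    coactD k H ∘ₗ map (mulLeft k c).dualMap f
      = lTensor _ (map (mulLeft k c).dualMap f) ∘ₗ coactD k H := by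
  simp only [coactD, comp_assoc, rTensor_comp_map, comulDcop_comp_dualMap_mulLeft]
  rw [← map_comp_rTensor, ← comp_assoc, ← comp_assoc]
  exact congr($((map_map_comp_assoc_eq _ _ _).symm) ∘ₗ _)

end DualComultiplication

lemma rTensor_antipode_mul_self {r : H ⊗[k] H} (hr : IsQuasitriangular k H r) :
    rTensor H (antipode k) r * r = 1 := by
  -- `F (a ⊗ (c ⊗ b)) = S(a) c ⊗ b` sends `r₁₃ r₂₃` to `(S ⊗ id)(r) r`
  -- and `(Δ ⊗ id) r` to `ε(r¹) ⊗ r²`.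
  let F : H ⊗[k] (H ⊗[k] H) →ₗ[k] H ⊗[k] H :=
    rTensor H (mul' k H ∘ₗ rTensor H (antipode k))
      ∘ₗ (TensorProduct.assoc k H H H).symm.toLinearMap
  have hF : ∀ x y : H ⊗[k] H, F (r13 k H x * r23 k H y) = rTensor H (antipode k) x * y := by
    intro x y
    induction x using TensorProduct.induction_on with
    | zero => simp [r13]
    | add x₁ x₂ h₁ h₂ => simp only [r13, map_add, add_mul] at *; rw [h₁, h₂]
    | tmul a b =>
      induction y using TensorProduct.induction_on with
      | zero => simp [r23]
      | add y₁ y₂ h₁ h₂ => simp only [r23, tmul_add, mul_add, map_add] at *; rw [h₁, h₂]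
      | tmul c d => simp [F, r13, r23]
  calc rTensor H (antipode k) r * r = F (r13 k H r * r23 k H r) := (hF r r).symm
    _ = F (TensorProduct.assoc k H H H (rTensor H comul r)) := by rw [hr.qt1]
    _ = rTensor H (Algebra.linearMap k H ∘ₗ counit) r := by
        simp [F, ← rTensor_comp_apply, comp_assoc, mul_antipode_rTensor_comul]
    _ = 1 := by
        rw [rTensor_comp_apply, ← (TensorProduct.lid k H).symm_apply_apply (rTensor H counit r),
          hr.qt4l]
        simp [Algebra.TensorProduct.one_def]

section MajidAction

variable (Sinv : H →ₗ[k] H) (hS1 : Sinv ∘ₗ antipode k = LinearMap.id)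
  (hS2 : antipode k ∘ₗ Sinv = LinearMap.id)

/-- `a ↦ (p ↦ p ↼ S⁻¹ a)`. -/
def ractInvAntipode : H →ₐ[k] Module.End k (Module.Dual k H) :=
  .ofLinearMap (Module.Dual.transpose ∘ₗ LinearMap.mul k H ∘ₗ Sinv)
    (by ext; simp [Module.Dual.transpose_apply, inv_antipode_one hS1])
    (fun a b => by ext; simp [Module.Dual.transpose_apply, inv_antipode_mul hS1 hS2, mul_assoc])

def phiMajidAlgHom : H ⊗[k] H →ₐ[k] Module.End k (Module.Dual k H ⊗[k] H) :=
  Algebra.TensorProduct.lift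
    ((Module.End.rTensorAlgHom k _ H).comp (ractInvAntipode Sinv hS1 hS2))
    ((Module.End.lTensorAlgHom k H _).comp (Algebra.lmul k H))
    (by intros; exact commute_rTensor_lTensor _ _)

lemma phiMajidAlgHom_tmul (a b : H) :
    phiMajidAlgHom Sinv hS1 hS2 (a ⊗ₜ b) = map (mulLeft k (Sinv a)).dualMap (mulLeft k b) :=
  (Algebra.TensorProduct.lift_tmul _ _ _ a b).trans (rTensor_comp_lTensor _ _ _)

lemma phiMajid_eq_phiMajidAlgHom (x : H ⊗[k] H) :
    phiMajid k H x Sinv = phiMajidAlgHom Sinv hS1 hS2 x := by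
  induction x using TensorProduct.induction_on with
  | zero => ext; simp [phiMajid]
  | tmul a b => ext; simp [phiMajid, phiMajidAlgHom_tmul, ract_tmul]
  | add x y hx hy => rw [map_add, ← hx, ← hy]; ext; simp [phiMajid]

lemma phiMajidAlgHom_bijective [FiniteDimensional k H] {r : H ⊗[k] H}
    (hr : IsQuasitriangular k H r) : Function.Bijective (phiMajidAlgHom Sinv hS1 hS2 r) := by
  have hinv : phiMajidAlgHom Sinv hS1 hS2 (rTensor H (antipode k) r)
      * phiMajidAlgHom Sinv hS1 hS2 r = 1 := by
    rw [← map_mul, rTensor_antipode_mul_self hr, map_one]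
  exact (Module.End.isUnit_iff _).mp (.of_mul_eq_one_right _ hinv)

lemma phiMajidAlgHom_counit_tmul (x : H ⊗[k] H) (h : H) :
    phiMajidAlgHom Sinv hS1 hS2 x ((counit : Module.Dual k H) ⊗ₜ h)
      = (counit : Module.Dual k H)
          ⊗ₜ (TensorProduct.lid k H (rTensor H counit x) * h) := by
  induction x using TensorProduct.induction_on with
  | zero => simp
  | tmul a b =>
    simp [phiMajidAlgHom_tmul, Bialgebra.dualMap_mulLeft_counit, counit_inv_antipode hS2,
      smul_tmul]
  | add x y hx hy => simp [hx, hy, add_mul, tmul_add]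

lemma commute_phiMajidAlgHom_lTensor_mulRight (x : H ⊗[k] H) (h : H) :
    Commute (phiMajidAlgHom Sinv hS1 hS2 x) (lTensor (Module.Dual k H) (mulRight k h)) := by
  induction x using TensorProduct.induction_on with
  | zero => simp
  | tmul a b =>
    rw [phiMajidAlgHom_tmul]
    show map _ _ ∘ₗ lTensor _ _ = lTensor _ _ ∘ₗ map _ _
    rw [map_comp_lTensor, lTensor_comp_map, ← Module.End.mul_eq_comp,
      (commute_mulLeft_right b h).eq]
    rfl
  | add x y hx hy => rw [map_add]; exact hx.add_left hy

lemma coactD_comp_phiMajidAlgHom [FiniteDimensional k H] (x : H ⊗[k] H) :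
    coactD k H ∘ₗ phiMajidAlgHom Sinv hS1 hS2 x
      = lTensor _ (phiMajidAlgHom Sinv hS1 hS2 x) ∘ₗ coactD k H := by
  induction x using TensorProduct.induction_on with
  | zero => simp
  | tmul a b => rw [phiMajidAlgHom_tmul, coactD_comp_map_dualMap_mulLeft]
  | add x y hx hy => rw [map_add, comp_add, hx, hy, lTensor_add, add_comp]

end MajidAction

end Paper

/-- for a finite dimensional quasitriangular Hopf algebra `H`, Majid's map
`φ(p ⊗ h) = (p ↼ S⁻¹(r¹)) ⊗ r² h` is bijective, fixes `ε ⊗ h`, is a morphism of right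
`H`-modules and a morphism of left `H^{*cop}`-comodules. -/
theorem statement18 {k H : Type u} [Field k] [Ring H] [HopfAlgebra k H]
    [FiniteDimensional k H] (Sinv : H →ₗ[k] H)
    (hS1 : Sinv ∘ₗ HopfAlgebra.antipode (R := k) (A := H) = LinearMap.id)
    (hS2 : HopfAlgebra.antipode (R := k) (A := H) ∘ₗ Sinv = LinearMap.id)
    (r : H ⊗[k] H) (hr : IsQuasitriangular k H r) :
    Function.Bijective (phiMajid k H r Sinv) ∧
    (∀ h : H, phiMajid k H r Sinv
        ((Coalgebra.counit (R := k) (A := H) : Module.Dual k H) ⊗ₜ[k] h)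
      = (Coalgebra.counit (R := k) (A := H) : Module.Dual k H) ⊗ₜ[k] h) ∧
    (∀ h : H, phiMajid k H r Sinv ∘ₗ lTensor (Module.Dual k H) (mulRight k h)
      = lTensor (Module.Dual k H) (mulRight k h) ∘ₗ phiMajid k H r Sinv) ∧
    coactD k H ∘ₗ phiMajid k H r Sinv
      = lTensor (Module.Dual k H) (phiMajid k H r Sinv) ∘ₗ coactD k H := by
  simp only [phiMajid_eq_phiMajidAlgHom Sinv hS1 hS2]
  refine ⟨phiMajidAlgHom_bijective Sinv hS1 hS2 hr, fun h => ?_,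
    fun h => (commute_phiMajidAlgHom_lTensor_mulRight Sinv hS1 hS2 r h).eq,
    coactD_comp_phiMajidAlgHom Sinv hS1 hS2 r⟩
  rw [phiMajidAlgHom_counit_tmul, hr.qt4l, one_mul]
end
end
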